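/- arXiv:1005.2605 — 5 statements merged into one kernel-verified Lean document; each statement's English description precedes it below -/
import Mathlib

section
/- For every natural number a and every integer b, one has h(a+1,b) + h(a,b-1) = 2·h(a,b). -/
/-- `hcoef a b = Σ_{j=0}^{min(a,b)} (-1)^j 2^{a-j} binom(a,j)`; it is `0` when `b < 0`. -/
def hcoef (a : ℕ) (b : ℤ) : ℤ :=
  ∑ j ∈ Finset.range (a + 1),
    if (j : ℤ) ≤ b then (-1) ^ j * 2 ^ (a - j) * (a.choose j) else 0

/-- For every natural number `a` and every integer `b`,
`h(a+1,b) + h(a,b-1) = 2·h(a,b)`. -/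
theorem hcoef_rec (a : ℕ) (b : ℤ) :
    hcoef (a + 1) b + hcoef a (b - 1) = 2 * hcoef a b := by
  unfold hcoef
  rw [Finset.mul_sum]
  have hR : ∀ j ∈ Finset.range (a+1),
      2 * (if (j : ℤ) ≤ b then ((-1:ℤ)) ^ j * 2 ^ (a - j) * (a.choose j) else 0)
        = (if (j : ℤ) ≤ b then ((-1:ℤ)) ^ j * 2 ^ (a + 1 - j) * (a.choose j) else 0) := by
    intro j hj
    simp only [Finset.mem_range] at hj
    have h1 : a + 1 - j = (a - j) + 1 := by omega
    split
    · rw [h1]; ring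
    · ring
  rw [Finset.sum_congr rfl hR]
  have hR2 : (∑ j ∈ Finset.range (a+1),
      if (j : ℤ) ≤ b then ((-1:ℤ)) ^ j * 2 ^ (a + 1 - j) * (a.choose j) else 0)
    = ∑ j ∈ Finset.range (a+2),
      if (j : ℤ) ≤ b then ((-1:ℤ)) ^ j * 2 ^ (a + 1 - j) * (a.choose j) else 0 := by
    rw [Finset.sum_range_succ (n := a+1)]
    simp [Nat.choose_succ_self]
  rw [hR2]
  rw [Finset.sum_range_succ' (fun j => if (j : ℤ) ≤ b then ((-1:ℤ)) ^ j * 2 ^ (a + 1 - j) * ((a+1).choose j) else 0) (a+1),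
      Finset.sum_range_succ' (fun j => if (j : ℤ) ≤ b then ((-1:ℤ)) ^ j * 2 ^ (a + 1 - j) * (a.choose j) else 0) (a+1)]
  simp only [Nat.choose_zero_right]
  rw [add_right_comm, ← Finset.sum_add_distrib]
  congr 1
  apply Finset.sum_congr rfl
  intro i hi
  simp only [Finset.mem_range] at hi
  have hc : (i:ℤ) ≤ b - 1 ↔ ((i+1 : ℕ):ℤ) ≤ b := by push_cast; omega
  by_cases h : ((i+1:ℕ):ℤ) ≤ b
  · rw [if_pos h, if_pos (hc.mpr h), if_pos h]
    have h2 : a + 1 - (i+1) = a - i := by omega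
    rw [h2, Nat.choose_succ_succ]
    push_cast
    ring
  · rw [if_neg h, if_neg (fun hh => h (hc.mp hh)), if_neg h]
    ring
end

section
/- If θ is a nonempty skew diagram that is not a horizontal strip, then A(θ,p) = 0 for every integer p. -/
/-!
A skew diagram is order-convex in `ℤ × ℤ`, so if it is not a horizontal strip it contains a
box directly below another one. The lexicographically last such box, ordered by column and
then by row, is a south-east corner `c`. The box above `c` is not a south-east corner, so it
survives the removal of any set of corners and keeps the column of `c` occupied: adding `c` to
`S` does not change `χ(θ ∖ S, p)`, and the terms of `A(θ, p)` cancel in pairs `S`, `S ∪ {c}`.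
-/

/-- The south-east corners of a finite set of boxes: boxes `(i,j)` such that
neither `(i+1,j)` nor `(i,j+1)` belongs to the set. -/
def seCorners (θ : Finset (ℤ × ℤ)) : Finset (ℤ × ℤ) :=
  θ.filter fun b => (b.1 + 1, b.2) ∉ θ ∧ (b.1, b.2 + 1) ∉ θ

/-- `c(θ)`: the number of nonempty columns of `θ`. -/
def colCount (θ : Finset (ℤ × ℤ)) : ℕ := (θ.image Prod.snd).card

/-- `χ(φ,p) = 1` if `p ≤ c(φ)` and `0` otherwise. -/
def chi (φ : Finset (ℤ × ℤ)) (p : ℤ) : ℤ := if p ≤ (colCount φ : ℤ) then 1 else 0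

/-- `A(θ,p) = Σ_S (-1)^{|S|} χ(θ∖S, p)`, the sum over subsets `S` of the set of
south-east corners of `θ`. -/
def Acoef (θ : Finset (ℤ × ℤ)) (p : ℤ) : ℤ :=
  ∑ S ∈ (seCorners θ).powerset, (-1) ^ S.card * chi (θ \ S) p

/-- A partition in the `m × k` rectangle: a weakly decreasing sequence
`λ_1 ≥ … ≥ λ_m ≥ 0` of integers with `λ_1 ≤ k` (indexed by `1,…,m`). -/
def IsRectPartition (m k : ℕ) (lam : ℤ → ℤ) : Prop :=
  (∀ i j : ℤ, 1 ≤ i → i ≤ j → j ≤ (m : ℤ) → lam j ≤ lam i) ∧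
  (∀ i : ℤ, 1 ≤ i → i ≤ (m : ℤ) → 0 ≤ lam i) ∧ lam 1 ≤ (k : ℤ)

/-- The Young diagram `{(i,j) : 1 ≤ i ≤ m, 1 ≤ j ≤ λ_i}` of a partition in the
`m × k` rectangle. -/
noncomputable def youngD (m k : ℕ) (lam : ℤ → ℤ) : Finset (ℤ × ℤ) :=
  (Finset.Icc (1 : ℤ) (m : ℤ) ×ˢ Finset.Icc (1 : ℤ) (k : ℤ)).filter fun b => b.2 ≤ lam b.1

/-- `θ` is a skew diagram in the `m × k` rectangle: `θ = ν/λ` for partitions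
`λ ⊆ ν` in the `m × k` rectangle. -/
def IsSkewDiagram (m k : ℕ) (θ : Finset (ℤ × ℤ)) : Prop :=
  ∃ lam nu : ℤ → ℤ, IsRectPartition m k lam ∧ IsRectPartition m k nu ∧
    (∀ i : ℤ, 1 ≤ i → i ≤ (m : ℤ) → lam i ≤ nu i) ∧
    θ = youngD m k nu \ youngD m k lam

/-- A horizontal strip contains at most one box in each column. -/
def IsHorizontalStrip (θ : Finset (ℤ × ℤ)) : Prop :=
  ∀ b ∈ θ, ∀ b' ∈ θ, b.2 = b'.2 → b.1 = b'.1

theorem sum_powerset_neg_one_pow_card_mul_eq_zero {α R : Type*} [DecidableEq α] [Ring R]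
    {T : Finset α} {c : α} (hc : c ∈ T) (f : Finset α → R)
    (hf : ∀ S ⊆ T.erase c, f (insert c S) = f S) :
    ∑ S ∈ T.powerset, (-1) ^ S.card * f S = 0 := by
  have hcT : c ∉ T.erase c := Finset.notMem_erase c T
  rw [← Finset.insert_erase hc, Finset.sum_powerset_insert hcT, ← Finset.sum_add_distrib]
  refine Finset.sum_eq_zero fun S hS => ?_
  rw [Finset.mem_powerset] at hS
  rw [hf S hS, Finset.card_insert_of_notMem fun h => hcT (hS h), pow_succ, mul_neg_one,
    neg_mul, add_neg_cancel]

theorem colCount_erase_of_mem_column {φ : Finset (ℤ × ℤ)} {b c : ℤ × ℤ} (hb : b ∈ φ)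
    (hbc : b ≠ c) (hcol : b.2 = c.2) : colCount (φ.erase c) = colCount φ := by
  unfold colCount
  congr 1
  refine (Finset.image_subset_image (Finset.erase_subset c φ)).antisymm fun j hj => ?_
  obtain ⟨x, hx, rfl⟩ := Finset.mem_image.1 hj
  by_cases hxc : x = c
  · exact Finset.mem_image.2 ⟨b, Finset.mem_erase.2 ⟨hbc, hb⟩, hxc ▸ hcol⟩
  · exact Finset.mem_image_of_mem _ (Finset.mem_erase.2 ⟨hxc, hx⟩)

theorem Acoef_eq_zero_of_mem_seCorners {θ : Finset (ℤ × ℤ)} {c : ℤ × ℤ}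
    (hc : c ∈ seCorners θ) (habove : (c.1 - 1, c.2) ∈ θ) (p : ℤ) : Acoef θ p = 0 := by
  have hcθ : c ∈ θ := (Finset.mem_filter.1 hc).1
  have habove_ne : (c.1 - 1, c.2) ≠ c := fun h => by simpa using congrArg Prod.fst h
  have habove_notMem : (c.1 - 1, c.2) ∉ seCorners θ := fun h =>
    (Finset.mem_filter.1 h).2.1 (by simpa using hcθ)
  refine sum_powerset_neg_one_pow_card_mul_eq_zero hc _ fun S hS => ?_
  have habove_mem : (c.1 - 1, c.2) ∈ θ \ S :=
    Finset.mem_sdiff.2 ⟨habove, fun h => habove_notMem (Finset.mem_of_mem_erase (hS h))⟩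
  rw [chi, chi, Finset.sdiff_insert, colCount_erase_of_mem_column habove_mem habove_ne rfl]

theorem IsSkewDiagram.ordConnected {m k : ℕ} {θ : Finset (ℤ × ℤ)} (hθ : IsSkewDiagram m k θ) :
    (θ : Set (ℤ × ℤ)).OrdConnected := by
  obtain ⟨lam, nu, hlam, hnu, -, rfl⟩ := hθ
  refine ⟨fun x hx y hy z ⟨hxz, hzy⟩ => ?_⟩
  rw [Prod.le_def] at hxz hzy
  simp only [youngD, Finset.coe_sdiff, Finset.coe_filter, Finset.mem_product, Finset.mem_Icc,
    Set.mem_sdiff, Set.mem_ofPred_eq, not_and, not_le] at hx hy ⊢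
  refine ⟨⟨⟨⟨by omega, by omega⟩, by omega, by omega⟩, ?_⟩, fun _ => ?_⟩
  · exact hzy.2.trans (hy.1.2.trans (hnu.1 z.1 y.1 (by omega) hzy.1 (by omega)))
  · exact (hlam.1 x.1 z.1 (by omega) hxz.1 (by omega)).trans_lt
      ((hx.2 hx.1.1).trans_le hxz.2)

theorem exists_mem_seCorners_below_of_not_isHorizontalStrip {θ : Finset (ℤ × ℤ)}
    (hθ : (θ : Set (ℤ × ℤ)).OrdConnected) (hhs : ¬ IsHorizontalStrip θ) :
    ∃ c ∈ seCorners θ, (c.1 - 1, c.2) ∈ θ := by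
  classical
  have mem_of_le_of_le {x y : ℤ × ℤ} (z : ℤ × ℤ) (hx : x ∈ θ) (hy : y ∈ θ) (hxz : x ≤ z)
      (hzy : z ≤ y) : z ∈ θ := by
    simpa using hθ.out (Finset.mem_coe.2 hx) (Finset.mem_coe.2 hy) ⟨hxz, hzy⟩
  set P := θ.filter fun x => (x.1 - 1, x.2) ∈ θ
  have hP : P.Nonempty := by
    simp only [IsHorizontalStrip, not_forall] at hhs
    obtain ⟨b, hb, b', hb', hcol, hrow⟩ := hhs
    wlog hlt : b.1 < b'.1 generalizing b b'
    · exact this b' hb' b hb hcol.symm (Ne.symm hrow) (by omega)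
    refine ⟨b', Finset.mem_filter.2 ⟨hb', mem_of_le_of_le _ hb hb' ?_ ?_⟩⟩ <;>
      exact Prod.mk_le_mk.2 ⟨by omega, by omega⟩
  obtain ⟨c, hcP, hmax⟩ := P.exists_max_image (fun x => toLex (x.2, x.1)) hP
  obtain ⟨hc, habove⟩ := Finset.mem_filter.1 hcP
  refine ⟨c, Finset.mem_filter.2 ⟨hc, fun hsouth => ?_, fun heast => ?_⟩, habove⟩
  · have := hmax _ (Finset.mem_filter.2 ⟨hsouth, by simpa using hc⟩)
    simp [Prod.Lex.toLex_le_toLex] at this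
  · have hnortheast : (c.1 - 1, c.2 + 1) ∈ θ :=
      mem_of_le_of_le _ habove heast (Prod.mk_le_mk.2 ⟨le_rfl, by omega⟩)
        (Prod.mk_le_mk.2 ⟨by omega, le_rfl⟩)
    have := hmax _ (Finset.mem_filter.2 ⟨heast, hnortheast⟩)
    simp [Prod.Lex.toLex_le_toLex] at this

theorem Acoef_eq_zero_of_not_horizontalStrip_general (m k : ℕ)
    (θ : Finset (ℤ × ℤ)) (hθ : IsSkewDiagram m k θ)
    (hhs : ¬ IsHorizontalStrip θ) (p : ℤ) : Acoef θ p = 0 := by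
  obtain ⟨c, hc, habove⟩ :=
    exists_mem_seCorners_below_of_not_isHorizontalStrip hθ.ordConnected hhs
  exact Acoef_eq_zero_of_mem_seCorners hc habove p

/-- If `θ` is a nonempty skew diagram that is not a horizontal strip, then
`A(θ,p) = 0` for every integer `p`. -/
theorem Acoef_eq_zero_of_not_horizontalStrip (m k : ℕ) (hm : 0 < m) (hk : 0 < k)
    (θ : Finset (ℤ × ℤ)) (hθ : IsSkewDiagram m k θ) (hne : θ.Nonempty)
    (hhs : ¬ IsHorizontalStrip θ) (p : ℤ) : Acoef θ p = 0 :=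
  Acoef_eq_zero_of_not_horizontalStrip_general m k θ hθ hhs p
end

section
/- Let θ be a nonempty horizontal strip, let θ̂ be the diagram obtained from θ by removing its top row, and set a = |θ| - |θ̂|. If θ̂ ≠ ∅, then for every integer p ≥ 1 one has A(θ,p) = A(θ̂, p-a) - A(θ̂, p-a+1). -/
/-!
Every subset of a horizontal strip is again a horizontal strip, and its number of columns is its
number of boxes, so `χ(θ∖S, p)` only depends on `|θ| - |S|`. Since the rows of a skew diagram are
intervals, removing a row of `θ` removes exactly one south-east corner of `θ`, namely the last box
`x` of that row, and leaves the other corners untouched. Splitting the subsets of the corners of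
`θ` according to whether they contain `x` then gives the two terms `A(θ̂, p-a)` and
`-A(θ̂, p-a+1)`.
-/

open Finset

lemma IsHorizontalStrip.mono {θ φ : Finset (ℤ × ℤ)} (hθ : IsHorizontalStrip θ) (hφ : φ ⊆ θ) :
    IsHorizontalStrip φ :=
  fun b hb b' hb' h => hθ b (hφ hb) b' (hφ hb') h

lemma IsHorizontalStrip.below_notMem {θ : Finset (ℤ × ℤ)} (hθ : IsHorizontalStrip θ)
    {b : ℤ × ℤ} (hb : b ∈ θ) : (b.1 + 1, b.2) ∉ θ := by
  intro h
  have := hθ b hb _ h rfl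
  omega

lemma IsHorizontalStrip.colCount_eq_card {θ : Finset (ℤ × ℤ)} (hθ : IsHorizontalStrip θ) :
    colCount θ = #θ :=
  card_image_of_injOn fun b hb b' hb' h => Prod.ext (hθ b hb b' hb' h) h

lemma IsSkewDiagram.mem_of_le_of_le {m k : ℕ} {θ : Finset (ℤ × ℤ)} (hθ : IsSkewDiagram m k θ)
    {i j j' j'' : ℤ} (h : (i, j) ∈ θ) (h' : (i, j') ∈ θ) (hj : j ≤ j'') (hj' : j'' ≤ j') :
    (i, j'') ∈ θ := by
  obtain ⟨lam, nu, -, -, -, rfl⟩ := hθ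
  simp only [youngD, mem_sdiff, mem_filter, mem_product, mem_Icc, not_and, not_le] at h h' ⊢
  omega

lemma chi_sdiff_of_isHorizontalStrip {θ S : Finset (ℤ × ℤ)} (hθ : IsHorizontalStrip θ)
    (hS : S ⊆ θ) (p : ℤ) : chi (θ \ S) p = if p + #S ≤ #θ then 1 else 0 := by
  have hcard := card_le_card hS
  rw [chi, (hθ.mono sdiff_subset).colCount_eq_card, card_sdiff_of_subset hS]
  exact if_congr (by omega) rfl rfl

lemma seCorners_subset (θ : Finset (ℤ × ℤ)) : seCorners θ ⊆ θ :=
  filter_subset _ _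

lemma Acoef_eq_sub_of_seCorners_eq_insert {θ φ : Finset (ℤ × ℤ)} {x : ℤ × ℤ}
    (hθ : IsHorizontalStrip θ) (hφθ : φ ⊆ θ) (hx : x ∉ seCorners φ)
    (hcorners : seCorners θ = insert x (seCorners φ)) (p : ℤ) :
    Acoef θ p = Acoef φ (p - (#θ - #φ)) - Acoef φ (p - (#θ - #φ) + 1) := by
  have hxθ : x ∈ θ := seCorners_subset θ (hcorners ▸ mem_insert_self x _)
  have hφcard := card_le_card hφθ
  have hchi : ∀ S ⊆ seCorners φ, ∀ q, chi (φ \ S) q = if q + #S ≤ #φ then 1 else 0 :=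
    fun S hS => chi_sdiff_of_isHorizontalStrip (hθ.mono hφθ) (hS.trans (seCorners_subset φ))
  have hkeep : ∀ S ∈ (seCorners φ).powerset,
      (-1) ^ #S * chi (θ \ S) p = (-1) ^ #S * chi (φ \ S) (p - (#θ - #φ)) := by
    intro S hS
    have hSθ : S ⊆ θ := (mem_powerset.1 hS).trans ((seCorners_subset φ).trans hφθ)
    rw [chi_sdiff_of_isHorizontalStrip hθ hSθ, hchi S (mem_powerset.1 hS)]
    exact congrArg _ (if_congr (by omega) rfl rfl)
  have hdrop : ∀ S ∈ (seCorners φ).powerset,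
      (-1) ^ #(insert x S) * chi (θ \ insert x S) p
        = -((-1) ^ #S * chi (φ \ S) (p - (#θ - #φ) + 1)) := by
    intro S hS
    have hSθ : S ⊆ θ := (mem_powerset.1 hS).trans ((seCorners_subset φ).trans hφθ)
    have hxS : x ∉ S := fun h => hx (mem_powerset.1 hS h)
    rw [chi_sdiff_of_isHorizontalStrip hθ (insert_subset hxθ hSθ), hchi S (mem_powerset.1 hS),
      card_insert_of_notMem hxS,
      if_congr (show p + ↑(#S + 1) ≤ (#θ : ℤ) ↔ p - (#θ - #φ) + 1 + #S ≤ #φ by omega) rfl rfl]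
    ring
  rw [Acoef, hcorners, sum_powerset_insert hx, sum_congr rfl hkeep, sum_congr rfl hdrop,
    sum_neg_distrib, ← sub_eq_add_neg, Acoef, Acoef]

lemma seCorners_filter_ne {θ : Finset (ℤ × ℤ)} (hθ : IsHorizontalStrip θ) (r : ℤ) :
    seCorners (θ.filter fun b => b.1 ≠ r) = (seCorners θ).filter fun b => b.1 ≠ r := by
  ext b
  simp only [seCorners, mem_filter]
  constructor
  · rintro ⟨⟨hb, hbr⟩, -, hright⟩
    exact ⟨⟨hb, hθ.below_notMem hb, fun h => hright ⟨h, hbr⟩⟩, hbr⟩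
  · rintro ⟨⟨hb, hbelow, hright⟩, hbr⟩
    exact ⟨⟨hb, hbr⟩, fun h => hbelow h.1, fun h => hright h.1⟩

lemma seCorners_filter_eq {m k : ℕ} {θ : Finset (ℤ × ℤ)} (hθ : IsSkewDiagram m k θ)
    (hhs : IsHorizontalStrip θ) {x : ℤ × ℤ} (hx : x ∈ θ)
    (hlast : ∀ b ∈ θ, b.1 = x.1 → b.2 ≤ x.2) :
    (seCorners θ).filter (fun b => b.1 = x.1) = {x} := by
  ext b
  simp only [seCorners, mem_filter, mem_singleton]
  constructor
  · rintro ⟨⟨hb, -, hright⟩, hbx⟩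
    refine Prod.ext hbx (le_antisymm (hlast b hb hbx) (not_lt.1 fun hlt => hright ?_))
    exact hθ.mem_of_le_of_le (j' := x.2) hb (hbx ▸ hx) (by omega) hlt
  · rintro rfl
    exact ⟨⟨hx, hhs.below_notMem hx, fun h => by linarith [hlast _ h rfl]⟩, rfl⟩

theorem Acoef_remove_top_row_general (m k : ℕ)
    (θ : Finset (ℤ × ℤ)) (hθ : IsSkewDiagram m k θ) (hhs : IsHorizontalStrip θ)
    (r : ℤ) (hr : ∃ b ∈ θ, b.1 = r)
    (θhat : Finset (ℤ × ℤ)) (hθhat : θhat = θ.filter fun b => b.1 ≠ r)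
    (a : ℤ) (ha : a = (θ.card : ℤ) - (θhat.card : ℤ))
    (p : ℤ) :
    Acoef θ p = Acoef θhat (p - a) - Acoef θhat (p - a + 1) := by
  subst hθhat ha
  obtain ⟨x, hx, hxlast⟩ := exists_max_image (θ.filter fun b => b.1 = r) Prod.snd
    (by simpa only [Finset.Nonempty, mem_filter] using hr)
  obtain ⟨hxθ, rfl⟩ := mem_filter.1 hx
  have hrow := seCorners_filter_eq hθ hhs hxθ fun b hb hbx => hxlast b (mem_filter.2 ⟨hb, hbx⟩)
  have hcorners : seCorners θ = insert x (seCorners (θ.filter fun b => b.1 ≠ x.1)) := by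
    rw [seCorners_filter_ne hhs, insert_eq, ← hrow]
    exact (filter_union_filter_not_eq _ _).symm
  refine Acoef_eq_sub_of_seCorners_eq_insert hhs (filter_subset _ _) ?_ hcorners p
  rw [seCorners_filter_ne hhs]
  simp

/-- Let `θ` be a nonempty horizontal strip, let `θ̂` be obtained from `θ` by
removing its top row (the row of smallest index), and set `a = |θ| - |θ̂|`.
If `θ̂ ≠ ∅`, then for every integer `p ≥ 1`,
`A(θ,p) = A(θ̂, p-a) - A(θ̂, p-a+1)`. -/
theorem Acoef_remove_top_row (m k : ℕ) (hm : 0 < m) (hk : 0 < k)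
    (θ : Finset (ℤ × ℤ)) (hθ : IsSkewDiagram m k θ) (hhs : IsHorizontalStrip θ)
    (hne : θ.Nonempty)
    (r : ℤ) (hr : ∃ b ∈ θ, b.1 = r) (hrmin : ∀ b ∈ θ, r ≤ b.1)
    (θhat : Finset (ℤ × ℤ)) (hθhat : θhat = θ.filter fun b => b.1 ≠ r)
    (hhatne : θhat.Nonempty)
    (a : ℤ) (ha : a = (θ.card : ℤ) - (θhat.card : ℤ))
    (p : ℤ) (hp : 1 ≤ p) :
    Acoef θ p = Acoef θhat (p - a) - Acoef θhat (p - a + 1) :=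
  Acoef_remove_top_row_general m k θ hθ hhs r hr θhat hθhat a ha p
end

section
/- Let λ and μ be partitions in the m×k rectangle with λ_i ≤ (μ^∨)_i for all i, and set θ = μ^∨/λ. Then the set ∪X_θ = {u ∈ ℂ^n : u ∈ V for some V ∈ X_θ} is a ℂ-linear subspace of ℂ^n of dimension m + c(θ). -/
/-- The dual partition `μ^∨ = (k - μ_m, …, k - μ_1)`, i.e. `(μ^∨)_i = k - μ_{m+1-i}`. -/
def dualPart (m k : ℕ) (mu : ℤ → ℤ) : ℤ → ℤ := fun i => (k : ℤ) - mu ((m : ℤ) + 1 - i)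

/-- `E_a = span(e_1, …, e_a)` inside `ℂ^{m+k}` (0-indexed basis `Pi.single`). -/
noncomputable def stdE (m k : ℕ) (a : ℤ) : Submodule ℂ (Fin (m + k) → ℂ) :=
  Submodule.span ℂ {v | ∃ j : Fin (m + k), ((j : ℕ) : ℤ) + 1 ≤ a ∧ v = Pi.single j 1}

/-- `E^op_a = span(e_{n+1-a}, …, e_n)` inside `ℂ^{m+k}`, where `n = m + k`. -/
noncomputable def stdEop (m k : ℕ) (a : ℤ) : Submodule ℂ (Fin (m + k) → ℂ) :=
  Submodule.span ℂ
    {v | ∃ j : Fin (m + k), ((m + k : ℕ) : ℤ) - a ≤ ((j : ℕ) : ℤ) ∧ v = Pi.single j 1}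

/-- `V` belongs to the Richardson variety `X_θ` for `θ = μ^∨/λ`: `V` is an
`m`-dimensional subspace of `ℂ^n` with `dim(V ∩ E_{k+i-λ_i}) ≥ i` and
`dim(V ∩ E^op_{k+i-μ_i}) ≥ i` for all `1 ≤ i ≤ m`. -/
def InRichardson (m k : ℕ) (lam mu : ℤ → ℤ) (V : Submodule ℂ (Fin (m + k) → ℂ)) : Prop :=
  Module.finrank ℂ V = m ∧
  ∀ i : ℕ, 1 ≤ i → i ≤ m →
    i ≤ Module.finrank ℂ ↥(V ⊓ stdE m k ((k : ℤ) + (i : ℤ) - lam (i : ℤ))) ∧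
    i ≤ Module.finrank ℂ ↥(V ⊓ stdEop m k ((k : ℤ) + (i : ℤ) - mu (i : ℤ)))

/-!
Index the coordinates of `ℂ^n` from `0` and put `rowEnd i = k + i - λ_i`,
`rowStart i = i - 1 + μ_{m+1-i}` (both strictly increasing in `i`, with `λ`, `μ` extended past
the rectangle). `∪X_θ` is the coordinate subspace on the union `J` of the row intervals
`[rowStart i, rowEnd i)`.

A coordinate `x ∉ J` lies in a gap `rowEnd i ≤ x < rowStart (i + 1)`; there the conditions
`dim (V ∩ E_{rowEnd i}) ≥ i` and `dim (V ∩ E^op) ≥ m - i` (coordinates `≥ rowStart (i + 1)`)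
have complementary dimensions and disjoint supports, so `V` is their sum and vanishes at `x`.

Conversely `J` is the disjoint union of the pieces
`[rowStart i, min (rowEnd i) (rowStart (i + 1)))`; one vector supported in each piece, namely
the restriction of `u` (or a basis vector when that vanishes), spans some `V ∈ X_θ` containing
`u`. The piece of row `i` has exactly one element more than the set of columns whose lowest box
of `θ` lies in row `i`, whence `|J| = m + c(θ)`.
-/

open Module Submodule

section LinearAlgebra

variable {K M : Type*} [DivisionRing K] [AddCommGroup M] [Module K M]

theorem Submodule.le_sup_of_finrank_le_add [FiniteDimensional K M] {W A B : Submodule K M}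
    (hAB : Disjoint A B)
    (h : finrank K W ≤ finrank K ↥(W ⊓ A) + finrank K ↥(W ⊓ B)) : W ≤ A ⊔ B := by
  have hsum : finrank K ↥(W ⊓ A ⊔ W ⊓ B) = finrank K ↥(W ⊓ A) + finrank K ↥(W ⊓ B) := by
    have := finrank_sup_add_finrank_inf_eq (W ⊓ A) (W ⊓ B)
    rwa [(hAB.mono inf_le_right inf_le_right).eq_bot, finrank_bot, add_zero] at this
  have hW : W ⊓ A ⊔ W ⊓ B = W :=
    eq_of_le_of_finrank_le (sup_le inf_le_left inf_le_left) (hsum ▸ h)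
  exact hW ▸ sup_le_sup inf_le_right inf_le_right

variable {ι : Type*} {v : ι → M}

theorem LinearIndepOn.finrank_span_image {s : Finset ι} (hv : LinearIndepOn K v s) :
    finrank K ↥(span K (v '' s)) = s.card := by
  rw [Set.image_eq_range, finrank_span_eq_card hv]
  simp

theorem LinearIndepOn.card_le_finrank [FiniteDimensional K M] {s : Finset ι}
    (hv : LinearIndepOn K v s) {W : Submodule K M} (hW : ∀ i ∈ s, v i ∈ W) :
    s.card ≤ finrank K W :=
  hv.finrank_span_image ▸ finrank_mono (span_le.mpr (by rintro _ ⟨i, hi, rfl⟩; exact hW i hi))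

variable {κ : Type*}

theorem linearIndepOn_of_pairwiseDisjoint_support {v : ι → κ → K} {s : Set ι}
    (hd : s.PairwiseDisjoint fun i => Function.support (v i)) (hv : ∀ i ∈ s, v i ≠ 0) :
    LinearIndepOn K v s := by
  rw [LinearIndepOn, linearIndependent_iff']
  intro t g hg i hi
  obtain ⟨j, hj⟩ := Function.ne_iff.mp (hv i i.2)
  have hsum := congrFun hg j
  simp only [Finset.sum_apply, Pi.smul_apply, smul_eq_mul, Pi.zero_apply] at hsum
  rw [Finset.sum_eq_single i (fun i' _ hne => ?_) (fun h => (h hi).elim)] at hsum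
  · exact (mul_eq_zero.mp hsum).resolve_right hj
  · have : v i' j = 0 := Function.notMem_support.mp fun hj' =>
      Set.disjoint_left.mp (hd i'.2 i.2 (Subtype.coe_injective.ne hne)) hj' hj
    rw [this, mul_zero]

theorem exists_linearIndepOn_of_support_subset [DecidableEq κ] {S : ι → Set κ} {s : Finset ι}
    (hS : (s : Set ι).PairwiseDisjoint S) (hne : ∀ i ∈ s, (S i).Nonempty) {u : κ → K}
    (hu : Function.support u ⊆ ⋃ i ∈ s, S i) :
    ∃ v : ι → κ → K, LinearIndepOn K v s ∧ (∀ i, Function.support (v i) ⊆ S i) ∧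
      u ∈ span K (v '' s) := by
  classical
  -- a block of `u` that vanishes is replaced by a basis vector inside the block
  let e : ι → κ → K := fun i => if h : (S i).Nonempty then Pi.single h.some 1 else 0
  let v : ι → κ → K := fun i => if (S i).indicator u = 0 then e i else (S i).indicator u
  have he : ∀ i, Function.support (e i) ⊆ S i := by
    intro i
    by_cases h : (S i).Nonempty
    · simp only [e, dif_pos h, Pi.support_single_of_ne (one_ne_zero (α := K)),
        Set.singleton_subset_iff, h.some_mem]
    · simp only [e, dif_neg h, Function.support_zero, Set.empty_subset]
  have hsupp : ∀ i, Function.support (v i) ⊆ S i := by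
    intro i
    by_cases h : (S i).indicator u = 0
    · simpa only [v, if_pos h] using he i
    · simpa only [v, if_neg h] using Set.support_indicator_subset
  refine ⟨v, linearIndepOn_of_pairwiseDisjoint_support
    (hS.mono fun i => hsupp i) fun i hi => ?_, hsupp, ?_⟩
  · by_cases h : (S i).indicator u = 0
    · simp only [v, if_pos h, e, dif_pos (hne i hi), ne_eq, Pi.single_eq_zero_iff,
        one_ne_zero, not_false_eq_true]
    · simpa only [v, if_neg h] using h
  · have hsum : u = ∑ i ∈ s, (S i).indicator u := by
      ext x
      rw [Finset.sum_apply, ← Finset.indicator_biUnion_apply s S hS,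
        Set.indicator_eq_self.mpr hu]
    rw [hsum]
    refine sum_mem fun i hi => ?_
    by_cases h : (S i).indicator u = 0
    · exact h ▸ zero_mem _
    · have : v i = (S i).indicator u := if_neg h
      exact this ▸ subset_span (Set.mem_image_of_mem v hi)

end LinearAlgebra

section CoordSpan

variable (K : Type*) [DivisionRing K] (n : ℕ)

/-- Positions of basis vectors are 0-indexed and read in `ℤ`, so that `s` can be an integer
interval. -/
def coordSpan (s : Set ℤ) : Submodule K (Fin n → K) :=
  span K {v | ∃ j : Fin n, ((j : ℕ) : ℤ) ∈ s ∧ v = Pi.single j 1}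

variable {K n}

theorem mem_coordSpan {s : Set ℤ} {u : Fin n → K} :
    u ∈ coordSpan K n s ↔ ∀ j : Fin n, u j ≠ 0 → ((j : ℕ) : ℤ) ∈ s := by
  have : {v | ∃ j : Fin n, ((j : ℕ) : ℤ) ∈ s ∧ v = Pi.single j 1} =
      Pi.basisFun K (Fin n) '' {j | ((j : ℕ) : ℤ) ∈ s} := by
    ext v
    simp [eq_comm]
  rw [coordSpan, this, Module.Basis.mem_span_image]
  simp [Set.subset_def]

theorem coordSpan_mono {s t : Set ℤ} (h : s ⊆ t) : coordSpan K n s ≤ coordSpan K n t :=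
  span_mono fun _ ⟨j, hj, hv⟩ => ⟨j, h hj, hv⟩

theorem disjoint_coordSpan {s t : Set ℤ} (h : Disjoint s t) :
    Disjoint (coordSpan K n s) (coordSpan K n t) := by
  rw [disjoint_def]
  intro u hs ht
  ext j
  by_contra hj
  exact Set.disjoint_left.mp h (mem_coordSpan.mp hs j hj) (mem_coordSpan.mp ht j hj)

theorem finrank_coordSpan {s : Finset ℤ} (hs : s ⊆ Finset.Ico 0 n) :
    finrank K ↥(coordSpan K n s) = s.card := by
  have : {v | ∃ j : Fin n, ((j : ℕ) : ℤ) ∈ (s : Set ℤ) ∧ v = Pi.single j 1} =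
      Set.range fun j : {j : Fin n // ((j : ℕ) : ℤ) ∈ s} => (Pi.single j.1 1 : Fin n → K) := by
    ext v
    simp [eq_comm]
  have hli : LinearIndependent K fun j : {j : Fin n // ((j : ℕ) : ℤ) ∈ s} =>
      (Pi.single j.1 1 : Fin n → K) :=
    (Pi.linearIndependent_single_one (Fin n) K).comp _ Subtype.val_injective
  rw [coordSpan, this, finrank_span_eq_card hli, Fintype.card_subtype]
  refine Finset.card_bij (fun j _ => ((j : ℕ) : ℤ)) (by simp)
    (fun _ _ _ _ h => Fin.ext (by exact_mod_cast h)) fun x hx => ?_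
  have := Finset.mem_Ico.mp (hs hx)
  exact ⟨⟨x.toNat, by omega⟩, by simpa [Int.toNat_of_nonneg this.1] using hx, by simp; omega⟩

end CoordSpan

theorem stdE_eq_coordSpan (m k : ℕ) (a : ℤ) :
    stdE m k a = coordSpan ℂ (m + k) (Set.Iio a) := by
  simp only [stdE, coordSpan, Set.mem_Iio, Int.add_one_le_iff]

theorem stdEop_eq_coordSpan (m k : ℕ) (a : ℤ) :
    stdEop m k a = coordSpan ℂ (m + k) (Set.Ici ((m + k : ℕ) - a)) :=
  rfl

section IntervalUnion

open Finset

variable {l r : ℤ → ℤ} {a b : ℤ}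

theorem Int.exists_mem_Ico_add_one {f : ℤ → ℤ} {x : ℤ} (hab : a ≤ b) (ha : f a ≤ x)
    (hb : x < f (b + 1)) : ∃ i ∈ Icc a b, x ∈ Ico (f i) (f (i + 1)) := by
  induction b, hab using Int.leInduction with
  | base => exact ⟨a, by simp, by simp [ha, hb]⟩
  | succ b hab ih =>
    by_cases hx : x < f (b + 1)
    · obtain ⟨i, hi, hxi⟩ := ih hx
      exact ⟨i, Icc_subset_Icc_right (by omega) hi, hxi⟩
    · exact ⟨b + 1, by simp; omega, by simp; omega⟩

theorem biUnion_Ico_eq_biUnion_Ico_min (hl : Monotone l) (hr : Monotone r)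
    (hb : r b ≤ l (b + 1)) :
    ((Icc a b).biUnion fun i => Ico (l i) (r i)) =
      (Icc a b).biUnion fun i => Ico (l i) (min (r i) (l (i + 1))) := by
  ext x
  simp only [mem_biUnion, mem_Ico, lt_min_iff]
  constructor
  · rintro ⟨i₀, hi₀, hx⟩
    have hi₀' := mem_Icc.mp hi₀
    obtain ⟨i, hi, hxi⟩ := Int.exists_mem_Ico_add_one (f := l) (hi₀'.1.trans hi₀'.2)
      ((hl hi₀'.1).trans hx.1) (hx.2.trans_le ((hr hi₀'.2).trans hb))
    rw [mem_Ico] at hxi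
    have hle : i₀ ≤ i := by
      by_contra h
      have := hl (show i + 1 ≤ i₀ by omega)
      omega
    exact ⟨i, hi, hxi.1, hx.2.trans_le (hr hle), hxi.2⟩
  · rintro ⟨i, hi, hx⟩
    exact ⟨i, hi, hx.1, hx.2.1⟩

theorem pairwiseDisjoint_Ico_min (hl : Monotone l) (s : Set ℤ) :
    s.PairwiseDisjoint fun i => Ico (l i) (min (r i) (l (i + 1))) := by
  intro i _ j _ hij
  rw [Function.onFun, disjoint_left]
  intro x hxi hxj
  simp only [mem_Ico, lt_min_iff] at hxi hxj
  rcases hij.lt_or_gt with h | h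
  · have := hl (show i + 1 ≤ j by omega)
    omega
  · have := hl (show j + 1 ≤ i by omega)
    omega

theorem card_biUnion_Ico (hl : Monotone l) (hr : Monotone r) (hlr : ∀ i ∈ Icc a b, l i ≤ r i)
    (hb : r b ≤ l (b + 1)) :
    (((Icc a b).biUnion fun i => Ico (l i) (r i)).card : ℤ) =
      ∑ i ∈ Icc a b, (min (r i) (l (i + 1)) - l i) := by
  rw [biUnion_Ico_eq_biUnion_Ico_min hl hr hb, card_biUnion (pairwiseDisjoint_Ico_min hl _),
    Nat.cast_sum]
  refine sum_congr rfl fun i hi => ?_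
  rw [Int.card_Ico, Int.toNat_of_nonneg (sub_nonneg.mpr (le_min (hlr i hi) (hl (by omega))))]

theorem card_biUnion_Ioc_eq_card_biUnion_Ico_neg (s : Finset ℤ) (x y : ℤ → ℤ) :
    (s.biUnion fun i => Ioc (x i) (y i)).card = (s.biUnion fun i => Ico (-y i) (-x i)).card := by
  rw [← card_image_of_injective _ neg_injective, biUnion_image]
  refine congrArg card (biUnion_congr rfl fun i _ => ?_)
  ext c
  simp only [mem_image, mem_Ioc, mem_Ico]
  exact ⟨fun ⟨d, hd, hc⟩ => by omega, fun hc => ⟨-c, by omega, neg_neg c⟩⟩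

end IntervalUnion

section Richardson

open Finset

variable {m k : ℕ} {lam mu : ℤ → ℤ}

/-- Setting `λ_i = k` for `i < 1` and `λ_i = 0` for `i > m` removes the boundary cases at
rows `0` and `m + 1`. -/
def extendPart (m k : ℕ) (f : ℤ → ℤ) (i : ℤ) : ℤ :=
  if i < 1 then k else if i ≤ m then f i else 0

/-- `V ∈ X_θ` forces `V ∩ E_{rowEnd i}` to have dimension `≥ i`. -/
def rowEnd (m k : ℕ) (lam : ℤ → ℤ) (i : ℤ) : ℤ :=
  k + i - extendPart m k lam i

/-- `V ∈ X_θ` forces the part of `V` supported on coordinates `≥ rowStart i` (0-indexed) to have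
dimension `≥ m + 1 - i`. -/
def rowStart (m k : ℕ) (mu : ℤ → ℤ) (i : ℤ) : ℤ :=
  i - 1 + extendPart m k mu (m + 1 - i)

/-- The (0-indexed) coordinates spanning `∪X_θ`. -/
noncomputable def richardsonCoords (m k : ℕ) (lam mu : ℤ → ℤ) : Finset ℤ :=
  (Icc 1 (m : ℤ)).biUnion fun i => Ico (rowStart m k mu i) (rowEnd m k lam i)

theorem extendPart_of_mem {f : ℤ → ℤ} {i : ℤ} (h1 : 1 ≤ i) (h2 : i ≤ m) :
    extendPart m k f i = f i := by
  simp only [extendPart, if_neg (not_lt.mpr h1), if_pos h2]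

theorem extendPart_zero {f : ℤ → ℤ} : extendPart m k f 0 = k := by
  simp [extendPart]

theorem IsRectPartition.antitone_extendPart (h : IsRectPartition m k lam) :
    Antitone (extendPart m k lam) := by
  obtain ⟨hmono, hnonneg, hk⟩ := h
  intro i j hij
  simp only [extendPart]
  split_ifs <;> first
    | omega
    | exact hmono i j (by omega) hij (by omega)
    | exact (hmono 1 j le_rfl (by omega) (by omega)).trans hk
    | exact hnonneg i (by omega) (by omega)

theorem IsRectPartition.extendPart_nonneg (h : IsRectPartition m k lam) (i : ℤ) :
    0 ≤ extendPart m k lam i := by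
  simp only [extendPart]
  split_ifs <;> first | omega | exact h.2.1 i (by omega) (by omega)

theorem extendPart_add_extendPart_le
    (hsub : ∀ i : ℤ, 1 ≤ i → i ≤ (m : ℤ) → lam i ≤ dualPart m k mu i) {i : ℤ}
    (h1 : 1 ≤ i) (h2 : i ≤ m) :
    extendPart m k lam i + extendPart m k mu (m + 1 - i) ≤ k := by
  have := hsub i h1 h2
  rw [extendPart_of_mem h1 h2, extendPart_of_mem (by omega) (by omega)]
  simp only [dualPart] at this
  omega

theorem IsRectPartition.strictMono_rowEnd (h : IsRectPartition m k lam) :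
    StrictMono (rowEnd m k lam) := fun i j hij => by
  have := h.antitone_extendPart hij.le
  simp only [rowEnd]
  omega

theorem IsRectPartition.strictMono_rowStart (h : IsRectPartition m k mu) :
    StrictMono (rowStart m k mu) := fun i j hij => by
  have := h.antitone_extendPart (show (m : ℤ) + 1 - j ≤ m + 1 - i by omega)
  simp only [rowStart]
  omega

theorem rowEnd_zero : rowEnd m k lam 0 = 0 := by
  simp [rowEnd, extendPart]

theorem rowStart_zero : rowStart m k mu 0 = -1 := by
  simp [rowStart, extendPart]

theorem rowStart_add_one : rowStart m k mu (m + 1) = m + k := by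
  simp only [rowStart, extendPart, sub_self, zero_lt_one, if_true]
  ring

theorem rowStart_lt_rowEnd (hsub : ∀ i : ℤ, 1 ≤ i → i ≤ (m : ℤ) → lam i ≤ dualPart m k mu i)
    {i : ℤ} (h1 : 1 ≤ i) (h2 : i ≤ m) : rowStart m k mu i < rowEnd m k lam i := by
  have := extendPart_add_extendPart_le hsub h1 h2
  simp only [rowStart, rowEnd]
  omega

theorem rowEnd_le_rowStart_add_one (hlam : IsRectPartition m k lam) :
    rowEnd m k lam m ≤ rowStart m k mu (m + 1) := by
  have := hlam.extendPart_nonneg m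
  rw [rowStart_add_one, rowEnd]
  omega

theorem stdE_eq_coordSpan_rowEnd {i : ℤ} (h1 : 1 ≤ i) (h2 : i ≤ m) :
    stdE m k (k + i - lam i) = coordSpan ℂ (m + k) (Set.Iio (rowEnd m k lam i)) := by
  rw [stdE_eq_coordSpan, rowEnd, extendPart_of_mem h1 h2]

theorem stdEop_eq_coordSpan_rowStart {i : ℤ} (h1 : 1 ≤ i) (h2 : i ≤ m) :
    stdEop m k (k + i - mu i) = coordSpan ℂ (m + k) (Set.Ici (rowStart m k mu (m + 1 - i))) := by
  rw [stdEop_eq_coordSpan, rowStart, show (m : ℤ) + 1 - (m + 1 - i) = i by ring,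
    extendPart_of_mem h1 h2]
  congr 2
  push_cast
  ring

end Richardson

section Union

open Finset

variable {m k : ℕ} {lam mu : ℤ → ℤ}

theorem exists_rowEnd_le_lt_rowStart {x : ℤ} (hx0 : 0 ≤ x) (hxn : x < m + k)
    (hx : x ∉ richardsonCoords m k lam mu) :
    ∃ i : ℕ, i ≤ m ∧ rowEnd m k lam i ≤ x ∧ x < rowStart m k mu (i + 1) := by
  obtain ⟨i, hi, hxi⟩ :=
    Int.exists_mem_Ico_add_one (f := rowStart m k mu) (a := 0) (b := m) (x := x)
    (by omega) (by rw [rowStart_zero]; omega) (by rw [rowStart_add_one]; exact hxn)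
  rw [mem_Icc] at hi
  rw [mem_Ico] at hxi
  lift i to ℕ using hi.1
  refine ⟨i, by omega, ?_, hxi.2⟩
  rcases i.eq_zero_or_pos with rfl | hpos
  · simpa [rowEnd_zero] using hx0
  · by_contra h
    exact hx (mem_biUnion.mpr ⟨i, mem_Icc.mpr ⟨by omega, hi.2⟩, mem_Ico.mpr ⟨hxi.1, by omega⟩⟩)

variable {V : Submodule ℂ (Fin (m + k) → ℂ)}

theorem InRichardson.le_finrank_inf_rowEnd (hV : InRichardson m k lam mu V) {i : ℕ}
    (hi : i ≤ m) : i ≤ finrank ℂ ↥(V ⊓ coordSpan ℂ (m + k) (Set.Iio (rowEnd m k lam i))) := by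
  rcases i.eq_zero_or_pos with rfl | hpos
  · exact Nat.zero_le _
  · have := (hV.2 i hpos hi).1
    rwa [stdE_eq_coordSpan_rowEnd (by omega) (by omega)] at this

theorem InRichardson.le_finrank_inf_rowStart (hV : InRichardson m k lam mu V) {i : ℕ}
    (hi : i ≤ m) :
    m - i ≤ finrank ℂ ↥(V ⊓ coordSpan ℂ (m + k) (Set.Ici (rowStart m k mu (i + 1)))) := by
  rcases hi.eq_or_lt with rfl | hlt
  · simp
  · have := (hV.2 (m - i) (by omega) (by omega)).2
    rwa [stdEop_eq_coordSpan_rowStart (by omega) (by omega),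
      show (m : ℤ) + 1 - ((m - i : ℕ) : ℤ) = i + 1 by omega] at this

theorem InRichardson.le_coordSpan (hV : InRichardson m k lam mu V) :
    V ≤ coordSpan ℂ (m + k) (richardsonCoords m k lam mu) := by
  intro u hu
  rw [mem_coordSpan]
  intro j hj
  by_contra hJ
  obtain ⟨i, him, hend, hstart⟩ :=
    exists_rowEnd_le_lt_rowStart (by omega) (by have := j.2; omega) hJ
  have hsplit : V ≤ coordSpan ℂ (m + k)
      (Set.Iio (rowEnd m k lam i) ∪ Set.Ici (rowStart m k mu (i + 1))) := by
    refine (le_sup_of_finrank_le_add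
      (disjoint_coordSpan (Set.Iio_disjoint_Ici (by omega))) ?_).trans
      (sup_le (coordSpan_mono Set.subset_union_left) (coordSpan_mono Set.subset_union_right))
    have := hV.le_finrank_inf_rowEnd him
    have := hV.le_finrank_inf_rowStart him
    rw [hV.1]
    omega
  have := mem_coordSpan.mp (hsplit hu) j hj
  simp only [Set.mem_union, Set.mem_Iio, Set.mem_Ici] at this
  omega

theorem inRichardson_span (hlam : IsRectPartition m k lam) (hmu : IsRectPartition m k mu)
    {v : ℤ → Fin (m + k) → ℂ} (hv : LinearIndepOn ℂ v (Icc (1 : ℤ) m : Finset ℤ))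
    (hsupp : ∀ t ∈ Icc (1 : ℤ) m, ∀ j : Fin (m + k), v t j ≠ 0 →
      ((j : ℕ) : ℤ) ∈ Ico (rowStart m k mu t) (rowEnd m k lam t)) :
    InRichardson m k lam mu (span ℂ (v '' (Icc (1 : ℤ) m : Finset ℤ))) := by
  refine ⟨by rw [hv.finrank_span_image]; simp, fun i hi1 him => ⟨?_, ?_⟩⟩
  · have hrows : Icc (1 : ℤ) i ⊆ Icc 1 m := Icc_subset_Icc_right (by omega)
    rw [stdE_eq_coordSpan_rowEnd (by omega) (by omega)]
    calc i = (Icc (1 : ℤ) i).card := by simp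
      _ ≤ _ := (hv.mono (coe_subset.mpr hrows)).card_le_finrank fun t ht =>
        mem_inf.mpr ⟨subset_span (Set.mem_image_of_mem v (hrows ht)),
          mem_coordSpan.mpr fun j hj => by
            have hj := mem_Ico.mp (hsupp t (hrows ht) j hj)
            have := hlam.strictMono_rowEnd.monotone (mem_Icc.mp ht).2
            exact Set.mem_Iio.mpr (by omega)⟩
  · have hrows : Icc ((m : ℤ) + 1 - i) m ⊆ Icc 1 m := Icc_subset_Icc_left (by omega)
    rw [stdEop_eq_coordSpan_rowStart (by omega) (by omega)]
    calc i = (Icc ((m : ℤ) + 1 - i) m).card := by rw [Int.card_Icc]; omega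
      _ ≤ _ := (hv.mono (coe_subset.mpr hrows)).card_le_finrank fun t ht =>
        mem_inf.mpr ⟨subset_span (Set.mem_image_of_mem v (hrows ht)),
          mem_coordSpan.mpr fun j hj => by
            have hj := mem_Ico.mp (hsupp t (hrows ht) j hj)
            have := hmu.strictMono_rowStart.monotone (mem_Icc.mp ht).1
            exact Set.mem_Ici.mpr (by omega)⟩

theorem richardsonCoords_eq_biUnion (hlam : IsRectPartition m k lam)
    (hmu : IsRectPartition m k mu) :
    richardsonCoords m k lam mu = (Icc 1 (m : ℤ)).biUnion fun i =>
      Ico (rowStart m k mu i) (min (rowEnd m k lam i) (rowStart m k mu (i + 1))) :=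
  biUnion_Ico_eq_biUnion_Ico_min hmu.strictMono_rowStart.monotone
    hlam.strictMono_rowEnd.monotone (rowEnd_le_rowStart_add_one hlam)

theorem exists_inRichardson_of_mem_coordSpan (hlam : IsRectPartition m k lam)
    (hmu : IsRectPartition m k mu)
    (hsub : ∀ i : ℤ, 1 ≤ i → i ≤ (m : ℤ) → lam i ≤ dualPart m k mu i) {u : Fin (m + k) → ℂ}
    (hu : u ∈ coordSpan ℂ (m + k) (richardsonCoords m k lam mu)) :
    ∃ V : Submodule ℂ (Fin (m + k) → ℂ), InRichardson m k lam mu V ∧ u ∈ V := by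
  set Q : ℤ → Finset ℤ := fun i =>
    Ico (rowStart m k mu i) (min (rowEnd m k lam i) (rowStart m k mu (i + 1)))
  have hQ : ∀ i ∈ Icc (1 : ℤ) m, ∃ j : Fin (m + k), ((j : ℕ) : ℤ) ∈ Q i := by
    intro i hi
    rw [mem_Icc] at hi
    have hstart : 0 ≤ rowStart m k mu i := by
      have := hmu.extendPart_nonneg (m + 1 - i)
      rw [rowStart]
      omega
    have hlt := rowStart_lt_rowEnd hsub hi.1 hi.2
    have hend := (hlam.strictMono_rowEnd.monotone hi.2).trans
      (rowEnd_le_rowStart_add_one (mu := mu) hlam)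
    have hnext := hmu.strictMono_rowStart (lt_add_one i)
    rw [rowStart_add_one] at hend
    exact ⟨⟨(rowStart m k mu i).toNat, by omega⟩, by simp only [Q, mem_Ico, lt_min_iff]; omega⟩
  obtain ⟨v, hv, hsupp, huv⟩ := exists_linearIndepOn_of_support_subset
    (S := fun i => {j : Fin (m + k) | ((j : ℕ) : ℤ) ∈ Q i}) (s := Icc 1 (m : ℤ))
    (fun i hi i' hi' hne => Set.disjoint_left.mpr fun j hj hj' =>
      disjoint_left.mp (pairwiseDisjoint_Ico_min hmu.strictMono_rowStart.monotone _ hi hi' hne)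
        hj hj')
    hQ
    (fun j hj => by
      have := mem_coordSpan.mp hu j hj
      rw [richardsonCoords_eq_biUnion hlam hmu, mem_coe, mem_biUnion] at this
      obtain ⟨i, hi, hji⟩ := this
      exact Set.mem_iUnion₂.mpr ⟨i, hi, hji⟩)
  exact ⟨_, inRichardson_span hlam hmu hv fun t _ j hj =>
    Ico_subset_Ico_right (min_le_left _ _) (hsupp t hj), huv⟩

theorem richardsonCoords_subset (hlam : IsRectPartition m k lam) (hmu : IsRectPartition m k mu) :
    richardsonCoords m k lam mu ⊆ Ico 0 ((m + k : ℕ) : ℤ) := by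
  intro x hx
  obtain ⟨i, hi, hxi⟩ := mem_biUnion.mp hx
  rw [mem_Icc] at hi
  rw [mem_Ico] at hxi ⊢
  have := hmu.extendPart_nonneg (m + 1 - i)
  have := hlam.extendPart_nonneg i
  simp only [rowStart, rowEnd] at hxi
  push_cast
  omega

theorem image_snd_youngD_sdiff (hlam : IsRectPartition m k lam) (hmu : IsRectPartition m k mu) :
    (youngD m k (dualPart m k mu) \ youngD m k lam).image Prod.snd =
      (Icc 1 (m : ℤ)).biUnion fun i =>
        Ioc (extendPart m k lam i) (k - extendPart m k mu (m + 1 - i)) := by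
  ext c
  simp only [youngD, Finset.mem_image, Finset.mem_sdiff, Finset.mem_filter,
    Finset.mem_product, Finset.mem_Icc, Finset.mem_Ioc, Finset.mem_biUnion, Prod.exists,
    exists_eq_right, not_and, not_le]
  simp only [dualPart]
  constructor
  · rintro ⟨i, ⟨⟨hi, hc⟩, hcnu⟩, hclam⟩
    refine ⟨i, hi, ?_⟩
    rw [extendPart_of_mem hi.1 hi.2, extendPart_of_mem (by omega) (by omega)]
    exact ⟨hclam ⟨hi, hc⟩, hcnu⟩
  · rintro ⟨i, hi, hc⟩
    rw [extendPart_of_mem hi.1 hi.2, extendPart_of_mem (by omega) (by omega)] at hc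
    have := hlam.2.1 i hi.1 hi.2
    have := hmu.2.1 (m + 1 - i) (by omega) (by omega)
    exact ⟨i, ⟨⟨hi, by omega, by omega⟩, hc.2⟩, fun _ => hc.1⟩

theorem colCount_youngD_sdiff (hlam : IsRectPartition m k lam) (hmu : IsRectPartition m k mu)
    (hsub : ∀ i : ℤ, 1 ≤ i → i ≤ (m : ℤ) → lam i ≤ dualPart m k mu i) :
    (colCount (youngD m k (dualPart m k mu) \ youngD m k lam) : ℤ) =
      ∑ i ∈ Icc (1 : ℤ) m, (min (k - extendPart m k lam i) (extendPart m k mu (m - i)) -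
        extendPart m k mu (m + 1 - i)) := by
  rw [colCount, image_snd_youngD_sdiff hlam hmu, card_biUnion_Ioc_eq_card_biUnion_Ico_neg,
    card_biUnion_Ico (l := fun i => -(k - extendPart m k mu (m + 1 - i)))
      (r := fun i => -extendPart m k lam i)
      (fun i j hij => by
        have := hmu.antitone_extendPart (show (m : ℤ) + 1 - j ≤ m + 1 - i by omega)
        simp only
        omega)
      (fun i j hij => neg_le_neg (hlam.antitone_extendPart hij))
      (fun i hi => by
        have := extendPart_add_extendPart_le hsub (mem_Icc.mp hi).1 (mem_Icc.mp hi).2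
        omega)
      (by
        have := hlam.extendPart_nonneg m
        simp only [sub_self, extendPart_zero]
        omega)]
  refine sum_congr rfl fun i _ => ?_
  rw [show (m : ℤ) + 1 - (i + 1) = m - i by ring]
  omega

theorem card_richardsonCoords (hlam : IsRectPartition m k lam) (hmu : IsRectPartition m k mu)
    (hsub : ∀ i : ℤ, 1 ≤ i → i ≤ (m : ℤ) → lam i ≤ dualPart m k mu i) :
    (richardsonCoords m k lam mu).card =
      m + colCount (youngD m k (dualPart m k mu) \ youngD m k lam) := by
  have hrow : ∀ i ∈ Icc (1 : ℤ) m,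
      min (rowEnd m k lam i) (rowStart m k mu (i + 1)) - rowStart m k mu i =
        1 + (min (k - extendPart m k lam i) (extendPart m k mu (m - i)) -
          extendPart m k mu (m + 1 - i)) := by
    intro i _
    simp only [rowStart, rowEnd]
    rw [show (m : ℤ) + 1 - (i + 1) = m - i by ring]
    omega
  zify
  rw [richardsonCoords, card_biUnion_Ico hmu.strictMono_rowStart.monotone
      hlam.strictMono_rowEnd.monotone
      (fun i hi => (rowStart_lt_rowEnd hsub (mem_Icc.mp hi).1 (mem_Icc.mp hi).2).le)
      (rowEnd_le_rowStart_add_one hlam),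
    colCount_youngD_sdiff hlam hmu hsub, sum_congr rfl hrow, sum_add_distrib, sum_const,
    Int.card_Icc]
  simp

end Union

theorem union_richardson_is_subspace_general (m k : ℕ)
    (lam mu : ℤ → ℤ) (hlam : IsRectPartition m k lam) (hmu : IsRectPartition m k mu)
    (hsub : ∀ i : ℤ, 1 ≤ i → i ≤ (m : ℤ) → lam i ≤ dualPart m k mu i) :
    ∃ W : Submodule ℂ (Fin (m + k) → ℂ),
      (W : Set (Fin (m + k) → ℂ)) =
        {u | ∃ V : Submodule ℂ (Fin (m + k) → ℂ), InRichardson m k lam mu V ∧ u ∈ V} ∧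
      Module.finrank ℂ ↥W =
        m + colCount (youngD m k (dualPart m k mu) \ youngD m k lam) := by
  refine ⟨coordSpan ℂ (m + k) (richardsonCoords m k lam mu), Set.ext fun u =>
    ⟨fun hu => exists_inRichardson_of_mem_coordSpan hlam hmu hsub hu,
      fun ⟨V, hV, huV⟩ => hV.le_coordSpan huV⟩, ?_⟩
  rw [finrank_coordSpan (richardsonCoords_subset hlam hmu), card_richardsonCoords hlam hmu hsub]

/-- The set `∪X_θ = {u ∈ ℂ^n : u ∈ V for some V ∈ X_θ}` (for `θ = μ^∨/λ`) is a
`ℂ`-linear subspace of `ℂ^n` of dimension `m + c(θ)`. -/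
theorem union_richardson_is_subspace (m k : ℕ) (hm : 0 < m) (hk : 0 < k)
    (lam mu : ℤ → ℤ) (hlam : IsRectPartition m k lam) (hmu : IsRectPartition m k mu)
    (hsub : ∀ i : ℤ, 1 ≤ i → i ≤ (m : ℤ) → lam i ≤ dualPart m k mu i) :
    ∃ W : Submodule ℂ (Fin (m + k) → ℂ),
      (W : Set (Fin (m + k) → ℂ)) =
        {u | ∃ V : Submodule ℂ (Fin (m + k) → ℂ), InRichardson m k lam mu V ∧ u ∈ V} ∧
      Module.finrank ℂ ↥W =
        m + colCount (youngD m k (dualPart m k mu) \ youngD m k lam) :=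
  union_richardson_is_subspace_general m k lam mu hlam hmu hsub
end

section
/- If θ is a nonempty shifted skew diagram that is not a rim, then C(θ,p) = 0 for every integer p; moreover, for every integer p ≤ 0 one has C(θ,p) = 1 if θ = ∅ and C(θ,p) = 0 if θ ≠ ∅, and C(∅,p) = 0 for every integer p > 0. -/
attribute [local instance] Classical.propDecidable

/-- The south-east rim of `θ`: boxes `(i,j) ∈ θ` such that no box `(i',j') ∈ θ`
has `i' > i` and `j' > j`. -/
def seRim (θ : Finset (ℤ × ℤ)) : Finset (ℤ × ℤ) :=
  θ.filter fun b => ∀ b' ∈ θ, ¬ (b.1 < b'.1 ∧ b.2 < b'.2)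

/-- `d(θ)`: the number of boxes in the south-east rim of `θ`. -/
def dRim (θ : Finset (ℤ × ℤ)) : ℕ := (seRim θ).card

/-- `θ` is a rim if it equals its own south-east rim. -/
def IsRim (θ : Finset (ℤ × ℤ)) : Prop := θ = seRim θ

/-- Two boxes are adjacent (connected) if they share a side. -/
def Adjacent (b b' : ℤ × ℤ) : Prop := |b.1 - b'.1| + |b.2 - b'.2| = 1

/-- `b'` can be reached from `b` by a chain of adjacent boxes of `θ`. -/
def Reach (θ : Finset (ℤ × ℤ)) (b b' : ℤ × ℤ) : Prop :=
  Relation.ReflTransGen (fun x y => y ∈ θ ∧ Adjacent x y) b b'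

/-- The connected components of `θ`. -/
noncomputable def comps (θ : Finset (ℤ × ℤ)) : Finset (Finset (ℤ × ℤ)) :=
  θ.image fun b => θ.filter fun b' => Reach θ b b'

/-- `N(θ)`: the number of connected components of `θ`. -/
noncomputable def Ncomp (θ : Finset (ℤ × ℤ)) : ℕ := (comps θ).card

/-- `N⁻(θ) = max(N(θ) - 1, 0)`. -/
noncomputable def Nminus (θ : Finset (ℤ × ℤ)) : ℕ := Ncomp θ - 1

/-- `N'(θ)`: the number of connected components of `θ` containing no diagonal box. -/
noncomputable def Nprime (θ : Finset (ℤ × ℤ)) : ℕ :=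
  ((comps θ).filter fun c => ∀ b ∈ c, b.1 ≠ b.2).card

/-- `B(θ,p) = Σ_S (-1)^{|S|} h(N⁻(θ∖S), d(θ∖S) - p)`, the sum over subsets `S`
of the set of south-east corners of `θ`. -/
noncomputable def Bcoef (θ : Finset (ℤ × ℤ)) (p : ℤ) : ℤ :=
  ∑ S ∈ (seCorners θ).powerset,
    (-1) ^ S.card * hcoef (Nminus (θ \ S)) ((dRim (θ \ S) : ℤ) - p)

/-- `C(θ,p) = Σ_S (-1)^{|S|} h(N'(θ∖S), d(θ∖S) - p)`, the sum over subsets `S`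
of the set of south-east corners of `θ`. -/
noncomputable def Ccoef (θ : Finset (ℤ × ℤ)) (p : ℤ) : ℤ :=
  ∑ S ∈ (seCorners θ).powerset,
    (-1) ^ S.card * hcoef (Nprime (θ \ S)) ((dRim (θ \ S) : ℤ) - p)

/-- A strict partition with largest part at most `n`, encoded as a function
with `lam i = 0` for `i` beyond the length. -/
def IsStrictPartition (n : ℕ) (lam : ℤ → ℤ) : Prop :=
  lam 1 ≤ (n : ℤ) ∧ (∀ i : ℤ, 1 ≤ i → 0 ≤ lam i) ∧
  (∀ i : ℤ, 1 ≤ i → lam (i + 1) = 0 ∨ lam (i + 1) < lam i)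

/-- The shifted Young diagram `{(i,j) : 1 ≤ i ≤ ℓ, i ≤ j ≤ λ_i + i - 1}` of a
strict partition. -/
noncomputable def shiftedD (n : ℕ) (lam : ℤ → ℤ) : Finset (ℤ × ℤ) :=
  (Finset.Icc (1 : ℤ) (n : ℤ) ×ˢ Finset.Icc (1 : ℤ) (2 * (n : ℤ))).filter
    fun b => b.1 ≤ b.2 ∧ b.2 ≤ lam b.1 + b.1 - 1

/-- `θ` is a shifted skew diagram: `θ = ν/λ` for strict partitions `λ ⊆ ν`
with `ν_1 ≤ n`. -/
def IsShiftedSkewDiagram (n : ℕ) (θ : Finset (ℤ × ℤ)) : Prop :=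
  ∃ lam nu : ℤ → ℤ, IsStrictPartition n lam ∧ IsStrictPartition n nu ∧
    (∀ i : ℤ, 1 ≤ i → lam i ≤ nu i) ∧ θ = shiftedD n nu \ shiftedD n lam

/-! Take a south-east corner `c` whose diagonal predecessor `w = c - (1,1)` lies in `θ`; one
exists when `θ` is not a rim. Pairing `S` with `S ∪ {c}` cancels the terms of `C(θ,p)`: removing
`c` keeps `d`, because `w` takes the place of `c` on the rim, and keeps `N'`, because the two
neighbours of `c` stay connected through `w`, and `w` is diagonal iff `c` is. For `p ≤ 0`, every
component of `θ ∖ S` contains a rim box, so `N' ≤ d ≤ d - p` and each `h` equals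
`(2 - 1)^{N'} = 1`; what remains is the alternating sum over the subsets of the corners, and
`θ` has a corner unless it is empty. -/

open Finset

lemma hcoef_of_neg {a : ℕ} {b : ℤ} (hb : b < 0) : hcoef a b = 0 :=
  sum_eq_zero fun j _ => if_neg (by omega)

lemma hcoef_of_le {a : ℕ} {b : ℤ} (hb : (a : ℤ) ≤ b) : hcoef a b = 1 := by
  have hterm : ∀ j ∈ range (a + 1),
      (if (j : ℤ) ≤ b then (-1 : ℤ) ^ j * 2 ^ (a - j) * (a.choose j) else 0) =
        (-1 : ℤ) ^ j * 2 ^ (a - j) * (a.choose j) := fun j hj =>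
    if_pos (by have := mem_range.1 hj; omega)
  have binomial := add_pow (-1 : ℤ) 2 a
  norm_num at binomial
  rw [hcoef, sum_congr rfl hterm, ← binomial]

lemma Finset.sum_powerset_neg_one_pow_mul_eq_zero {α R : Type*} [DecidableEq α] [CommRing R]
    {K : Finset α} {c : α} (hc : c ∈ K) (f : Finset α → R)
    (hf : ∀ t ⊆ K.erase c, f (insert c t) = f t) :
    ∑ S ∈ K.powerset, (-1) ^ S.card * f S = 0 := by
  rw [← insert_erase hc, sum_powerset_insert (notMem_erase c K), ← sum_add_distrib]
  refine sum_eq_zero fun t ht => ?_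
  have ht' := mem_powerset.1 ht
  have hct : c ∉ t := fun h => notMem_erase c K (ht' h)
  rw [hf t ht', card_insert_of_notMem hct]
  ring

section Components

variable {η : Finset (ℤ × ℤ)} {b c u x y : ℤ × ℤ}

lemma adjacent_comm : Adjacent x y ↔ Adjacent y x := by
  rw [Adjacent, Adjacent, abs_sub_comm x.1, abs_sub_comm x.2]

lemma adjacent_iff : Adjacent x y ↔
    x.1 = y.1 ∧ (x.2 = y.2 + 1 ∨ y.2 = x.2 + 1) ∨
    x.2 = y.2 ∧ (x.1 = y.1 + 1 ∨ y.1 = x.1 + 1) := by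
  rw [Adjacent]
  rcases abs_cases (x.1 - y.1) with ⟨h1, _⟩ | ⟨h1, _⟩ <;>
    rcases abs_cases (x.2 - y.2) with ⟨h2, _⟩ | ⟨h2, _⟩ <;>
      rw [h1, h2] <;> omega

lemma Adjacent.ne (h : Adjacent x y) : x ≠ y := by
  rintro rfl
  simp [Adjacent] at h

lemma Reach.single (hy : y ∈ η) (h : Adjacent x y) : Reach η x y :=
  Relation.ReflTransGen.single ⟨hy, h⟩

lemma Reach.trans (h : Reach η b x) (h' : Reach η x y) : Reach η b y :=
  Relation.ReflTransGen.trans h h'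

lemma Reach.mono {η' : Finset (ℤ × ℤ)} (hsub : η ⊆ η') (h : Reach η b x) : Reach η' b x :=
  Relation.ReflTransGen.mono (fun _ _ hxy => ⟨hsub hxy.1, hxy.2⟩) _ _ h

lemma Reach.mem (hb : b ∈ η) (h : Reach η b x) : x ∈ η := by
  induction h with
  | refl => exact hb
  | tail _ hstep _ => exact hstep.1

lemma Reach.symm (hb : b ∈ η) (h : Reach η b x) : Reach η x b := by
  induction h with
  | refl => exact Relation.ReflTransGen.refl
  | tail hbc hstep ih =>
    exact Relation.ReflTransGen.head ⟨Reach.mem hb hbc, adjacent_comm.1 hstep.2⟩ ih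

lemma reach_along {f : ℤ → ℤ × ℤ} (hf : ∀ t, Adjacent (f t) (f (t + 1))) {s s' : ℤ}
    (hs : s ≤ s') (hmem : ∀ t, s < t → t ≤ s' → f t ∈ η) : Reach η (f s) (f s') := by
  induction s', hs using Int.leInduction with
  | base => exact Relation.ReflTransGen.refl
  | succ t hst ih =>
    exact (ih fun t' h1 h2 => hmem t' h1 (by omega)).tail ⟨hmem _ (by omega) le_rfl, hf t⟩

noncomputable def comp (η : Finset (ℤ × ℤ)) (b : ℤ × ℤ) : Finset (ℤ × ℤ) :=
  η.filter (Reach η b)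

lemma mem_comp : x ∈ comp η b ↔ x ∈ η ∧ Reach η b x := mem_filter

lemma mem_comps {C : Finset (ℤ × ℤ)} : C ∈ comps η ↔ ∃ b ∈ η, comp η b = C := mem_image

lemma mem_comp_self (hb : b ∈ η) : b ∈ comp η b := mem_comp.2 ⟨hb, .refl⟩

lemma comp_eq_of_reach (hb : b ∈ η) (h : Reach η b x) : comp η x = comp η b := by
  ext y
  simp only [mem_comp]
  exact and_congr_right fun _ => ⟨(h.trans ·), ((h.symm hb).trans ·)⟩

lemma eq_comp_of_mem {C : Finset (ℤ × ℤ)} (hC : C ∈ comps η) (hx : x ∈ C) :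
    C = comp η x := by
  obtain ⟨b, hb, rfl⟩ := mem_comps.1 hC
  exact (comp_eq_of_reach hb (mem_comp.1 hx).2).symm

lemma eq_of_mem_comps {C C' : Finset (ℤ × ℤ)} (hC : C ∈ comps η) (hC' : C' ∈ comps η)
    (hx : x ∈ C) (hx' : x ∈ C') : C = C' :=
  (eq_comp_of_mem hC hx).trans (eq_comp_of_mem hC' hx').symm

lemma Ncomp_le_card {R : Finset (ℤ × ℤ)} (h : ∀ b ∈ η, ∃ r ∈ R, Reach η b r) :
    Ncomp η ≤ R.card := by
  refine card_le_card_of_surjOn (comp η) fun C hC => ?_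
  obtain ⟨b, hb, rfl⟩ := mem_comps.1 hC
  obtain ⟨r, hr, hbr⟩ := h b hb
  exact ⟨r, hr, comp_eq_of_reach hb hbr⟩

section Bypass

variable (hu : u ∈ η.erase c)
  (hbypass : ∀ y ∈ η.erase c, Adjacent y c → Reach (η.erase c) u y)
include hu hbypass

lemma reach_erase_of_bypass (hb : b ∈ η.erase c) (hx : x ∈ η.erase c) (h : Reach η b x) :
    Reach (η.erase c) b x := by
  suffices key : Reach (η.erase c) b (if x = c then u else x) by
    rwa [if_neg (ne_of_mem_erase hx)] at key
  clear hx
  induction h with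
  | refl => rw [if_neg (ne_of_mem_erase hb)]; exact .refl
  | @tail y z hby hyz ih =>
    have hyη : y ∈ η := Reach.mem (mem_of_mem_erase hb) hby
    by_cases hzc : z = c
    · subst z
      have hy : y ∈ η.erase c := mem_erase.2 ⟨hyz.2.ne, hyη⟩
      rw [if_neg hyz.2.ne] at ih
      rw [if_pos rfl]
      exact ih.trans ((hbypass y hy hyz.2).symm hu)
    · rw [if_neg hzc]
      have hz : z ∈ η.erase c := mem_erase.2 ⟨hzc, hyz.1⟩
      by_cases hyc : y = c
      · subst y
        rw [if_pos rfl] at ih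
        exact ih.trans (hbypass z hz (adjacent_comm.1 hyz.2))
      · rw [if_neg hyc] at ih
        exact ih.tail ⟨hz, hyz.2⟩

lemma comp_erase_of_bypass (hb : b ∈ η.erase c) :
    comp (η.erase c) b = (comp η b).erase c := by
  ext x
  simp only [mem_comp, mem_erase]
  constructor
  · rintro ⟨⟨hxc, hxη⟩, hr⟩
    exact ⟨hxc, hxη, hr.mono (erase_subset c η)⟩
  · rintro ⟨hxc, hxη, hr⟩
    exact ⟨⟨hxc, hxη⟩, reach_erase_of_bypass hu hbypass hb (mem_erase.2 ⟨hxc, hxη⟩) hr⟩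

lemma comps_erase_of_bypass (hcu : Adjacent c u) :
    comps (η.erase c) = (comps η).image (·.erase c) := by
  ext D
  simp only [mem_comps, mem_image]
  constructor
  · rintro ⟨b, hb, rfl⟩
    exact ⟨comp η b, ⟨b, mem_of_mem_erase hb, rfl⟩, (comp_erase_of_bypass hu hbypass hb).symm⟩
  · rintro ⟨C, ⟨b, hb, rfl⟩, rfl⟩
    by_cases hbc : b = c
    · subst hbc
      refine ⟨u, hu, ?_⟩
      rw [comp_erase_of_bypass hu hbypass hu,
        comp_eq_of_reach hb (.single (mem_of_mem_erase hu) hcu)]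
    · exact ⟨b, mem_erase.2 ⟨hbc, hb⟩, comp_erase_of_bypass hu hbypass (mem_erase.2 ⟨hbc, hb⟩)⟩

lemma Nprime_erase_of_bypass (hcu : Adjacent c u)
    (hdiag : c.1 = c.2 → ∃ v ∈ η.erase c, Reach η c v ∧ v.1 = v.2) :
    Nprime (η.erase c) = Nprime η := by
  have hu_comp : ∀ C ∈ comps η, c ∈ C → u ∈ C := fun C hC hcC => by
    rw [eq_comp_of_mem hC hcC]
    exact mem_comp.2 ⟨mem_of_mem_erase hu, .single (mem_of_mem_erase hu) hcu⟩
  have hinj : Set.InjOn (·.erase c) (comps η : Set (Finset (ℤ × ℤ))) := by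
    intro C hC C' hC' hCC'
    obtain ⟨x, hx⟩ : (C.erase c).Nonempty := by
      by_cases hcC : c ∈ C
      · exact ⟨u, mem_erase.2 ⟨ne_of_mem_erase hu, hu_comp C hC hcC⟩⟩
      · rw [erase_eq_of_notMem hcC]
        obtain ⟨b, hb, rfl⟩ := mem_comps.1 hC
        exact ⟨b, mem_comp_self hb⟩
    have hx' : x ∈ C'.erase c := by simpa only [hCC'] using hx
    exact eq_of_mem_comps hC hC' (mem_of_mem_erase hx) (mem_of_mem_erase hx')
  have hoffdiag : ∀ C ∈ comps η,
      (∀ b ∈ C.erase c, b.1 ≠ b.2) ↔ (∀ b ∈ C, b.1 ≠ b.2) := fun C hC => by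
    refine ⟨fun h b hb => ?_, fun h b hb => h b (mem_of_mem_erase hb)⟩
    by_cases hbc : b = c
    · subst b
      intro hcd
      obtain ⟨v, hv, hcv, hvd⟩ := hdiag hcd
      have hvC : v ∈ C := by
        rw [eq_comp_of_mem hC hb]
        exact mem_comp.2 ⟨mem_of_mem_erase hv, hcv⟩
      exact h v (mem_erase.2 ⟨ne_of_mem_erase hv, hvC⟩) hvd
    · exact h b (mem_erase.2 ⟨hbc, hb⟩)
  rw [Nprime, Nprime, comps_erase_of_bypass hu hbypass hcu, filter_image,
    card_image_of_injOn (hinj.mono (filter_subset _ _))]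
  exact congrArg card (filter_congr hoffdiag)

end Bypass

end Components

/-- The convexity properties of shifted skew diagrams `ν/λ`; the last two come from the
strictness of `λ`. -/
structure IsSkewShape (θ : Finset (ℤ × ℤ)) : Prop where
  fst_le_snd : ∀ b ∈ θ, b.1 ≤ b.2
  row_mem : ∀ {i j j' k : ℤ}, (i, j) ∈ θ → (i, j') ∈ θ → j ≤ k → k ≤ j' → (i, k) ∈ θ
  col_mem : ∀ {i i' k j : ℤ}, (i, j) ∈ θ → (i', j) ∈ θ → i ≤ k → k ≤ i' → (k, j) ∈ θ
  mem_of_lt_of_le : ∀ {i j i' j' : ℤ}, (i, j) ∈ θ → (i', j') ∈ θ → i < i' → j ≤ j' →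
    (i, j') ∈ θ
  add_one_mem_of_lt_of_lt : ∀ {i j i' j' : ℤ}, (i, j) ∈ θ → (i', j') ∈ θ → i < i' → j < j' →
    (i + 1, j + 1) ∈ θ
  sub_one_mem_of_sub_one_mem : ∀ {i j : ℤ}, (i - 1, j - 1) ∈ θ → (i, j) ∈ θ → i < j →
    (i, j - 1) ∈ θ

section StrictPartition

variable {n : ℕ} {lam nu : ℤ → ℤ}

lemma IsStrictPartition.add_le_add_of_pos (h : IsStrictPartition n nu) {i i' : ℤ}
    (hi : 1 ≤ i) (hii' : i ≤ i') (hpos : 0 < nu i') : nu i' + i' ≤ nu i + i := by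
  induction i', hii' using Int.leInduction with
  | base => exact le_rfl
  | succ k hik ih =>
    rcases h.2.2 k (by omega) with hz | hlt
    · omega
    · have := ih (by omega)
      omega

lemma mem_shiftedD_sdiff (hnu : IsStrictPartition n nu) (i j : ℤ) :
    (i, j) ∈ shiftedD n nu \ shiftedD n lam ↔
      1 ≤ i ∧ i ≤ j ∧ lam i + i ≤ j ∧ j < nu i + i := by
  simp only [mem_sdiff, shiftedD, mem_filter, mem_product, mem_Icc]
  constructor
  · rintro ⟨⟨⟨⟨hi1, hin⟩, hj⟩, hij, hjnu⟩, hnot⟩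
    exact ⟨hi1, hij, by omega, by omega⟩
  · rintro ⟨hi1, hij, hlamj, hjnu⟩
    have := hnu.add_le_add_of_pos le_rfl hi1 (by omega)
    have := hnu.1
    refine ⟨⟨⟨⟨hi1, ?_⟩, ?_, ?_⟩, hij, ?_⟩, ?_⟩ <;> omega

lemma IsShiftedSkewDiagram.isSkewShape {θ : Finset (ℤ × ℤ)} (h : IsShiftedSkewDiagram n θ) :
    IsSkewShape θ := by
  obtain ⟨lam, nu, hlam, hnu, -, rfl⟩ := h
  have mem := mem_shiftedD_sdiff (lam := lam) hnu
  have lam_nonneg := hlam.2.1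
  refine ⟨fun ⟨i, j⟩ hb => ((mem i j).1 hb).2.1, ?_, ?_, ?_, ?_, ?_⟩
  · intro i j j' k h1 h2 hk hk'
    rw [mem] at h1 h2 ⊢
    omega
  · intro i i' k j h1 h2 hk hk'
    rw [mem] at h1 h2 ⊢
    have := hnu.add_le_add_of_pos (i := k) (by omega) hk' (by omega)
    rcases (lam_nonneg k (by omega)).eq_or_lt with hz | hz
    · omega
    · have := hlam.add_le_add_of_pos (by omega) hk hz
      omega
  · intro i j i' j' h1 h2 hii' hjj'
    rw [mem] at h1 h2 ⊢
    have := hnu.add_le_add_of_pos (by omega) hii'.le (by omega)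
    omega
  · intro i j i' j' h1 h2 hii' hjj'
    rw [mem] at h1 h2 ⊢
    have := hnu.add_le_add_of_pos (i := i + 1) (by omega) hii' (by omega)
    rcases (lam_nonneg (i + 1) (by omega)).eq_or_lt with hz | hz
    · omega
    · have := hlam.add_le_add_of_pos (by omega) (le_add_of_nonneg_right zero_le_one) hz
      omega
  · intro i j h1 h2 hij
    rw [mem] at h1 h2 ⊢
    rcases (lam_nonneg i (by omega)).eq_or_lt with hz | hz
    · omega
    · have := hlam.add_le_add_of_pos (i := i - 1) (by omega) (by omega) hz
      omega

end StrictPartition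

section Corners

variable {θ S : Finset (ℤ × ℤ)} {b c : ℤ × ℤ}

lemma mem_seCorners : c ∈ seCorners θ ↔ c ∈ θ ∧ (c.1 + 1, c.2) ∉ θ ∧ (c.1, c.2 + 1) ∉ θ :=
  mem_filter

lemma mem_seRim : c ∈ seRim θ ↔ c ∈ θ ∧ ∀ b ∈ θ, ¬ (c.1 < b.1 ∧ c.2 < b.2) :=
  mem_filter

lemma seCorners_nonempty (h : θ.Nonempty) : (seCorners θ).Nonempty := by
  obtain ⟨m, hm, hmax⟩ := exists_max_image θ (fun b => b.1 + b.2) h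
  refine ⟨m, mem_seCorners.2 ⟨hm, fun h => ?_, fun h => ?_⟩⟩ <;> linarith [hmax _ h]

lemma eq_of_adjacent_of_mem_seCorners (hc : c ∈ seCorners θ) (hb : b ∈ θ)
    (hbc : Adjacent b c) : b = (c.1 - 1, c.2) ∨ b = (c.1, c.2 - 1) := by
  obtain ⟨-, hdown, hright⟩ := mem_seCorners.1 hc
  rw [adjacent_iff] at hbc
  rcases hbc with ⟨h1, h2 | h2⟩ | ⟨h1, h2 | h2⟩
  · exact absurd (show b = (c.1, c.2 + 1) from Prod.ext h1 h2) fun h => hright (h ▸ hb)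
  · exact .inr (Prod.ext h1 (by simp only; omega))
  · exact absurd (show b = (c.1 + 1, c.2) from Prod.ext h2 h1) fun h => hdown (h ▸ hb)
  · exact .inl (Prod.ext (by simp only; omega) h1)

lemma seCorners_eq_empty : seCorners θ = ∅ ↔ θ = ∅ := by
  refine ⟨fun h => ?_, fun h => by simp [h, seCorners]⟩
  by_contra hne
  simpa [h] using seCorners_nonempty (nonempty_iff_ne_empty.2 hne)

lemma notMem_seCorners_of_add_one_fst_mem (h : (b.1 + 1, b.2) ∈ θ) : b ∉ seCorners θ :=
  fun hb => (mem_seCorners.1 hb).2.1 h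

lemma notMem_seCorners_of_add_one_snd_mem (h : (b.1, b.2 + 1) ∈ θ) : b ∉ seCorners θ :=
  fun hb => (mem_seCorners.1 hb).2.2 h

end Corners

namespace IsSkewShape

variable {θ S : Finset (ℤ × ℤ)} {b c : ℤ × ℤ} (hθ : IsSkewShape θ)
include hθ

lemma not_lt_of_mem_seCorners (hc : c ∈ seCorners θ) (hb : b ∈ θ) :
    ¬ (c.1 < b.1 ∧ c.2 < b.2) := by
  rintro ⟨h1, h2⟩
  obtain ⟨hcθ, -, hright⟩ := mem_seCorners.1 hc
  exact hright (hθ.row_mem hcθ (hθ.mem_of_lt_of_le hcθ hb h1 h2.le) (by omega) (by omega))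

lemma eq_of_sub_one_lt (hc : c ∈ seCorners θ) (hb : b ∈ θ) (h1 : c.1 - 1 < b.1)
    (h2 : c.2 - 1 < b.2) : b = c := by
  obtain ⟨hcθ, hdown, hright⟩ := mem_seCorners.1 hc
  rcases (show c.1 ≤ b.1 by omega).lt_or_eq with h1 | h1 <;>
    rcases (show c.2 ≤ b.2 by omega).lt_or_eq with h2 | h2
  · exact absurd ⟨h1, h2⟩ (hθ.not_lt_of_mem_seCorners hc hb)
  · exact absurd (hθ.col_mem hcθ (h2 ▸ hb) (by omega) h1) hdown
  · exact absurd (hθ.row_mem hcθ (h1 ▸ hb) (by omega) h2) hright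
  · exact Prod.ext h1.symm h2.symm

lemma reach_sdiff (hS : S ⊆ seCorners θ) (hb : b ∈ θ) {b' : ℤ × ℤ} (hb' : b' ∈ θ \ S)
    (h1 : b.1 < b'.1) (h2 : b.2 < b'.2) : Reach (θ \ S) b b' := by
  obtain ⟨hb'θ, hb'S⟩ := mem_sdiff.1 hb'
  have hbend : (b.1, b'.2) ∈ θ := hθ.mem_of_lt_of_le hb hb'θ h1 h2.le
  have hrow : Reach (θ \ S) (b.1, b.2) (b.1, b'.2) := by
    refine reach_along (f := fun t => (b.1, t)) (fun t => by simp [adjacent_iff]) h2.le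
      fun t ht ht' => mem_sdiff.2 ⟨hθ.row_mem hb hbend ht.le ht', fun htS => ?_⟩
    obtain ⟨-, hdown, hright⟩ := mem_seCorners.1 (hS htS)
    rcases ht'.lt_or_eq with ht' | rfl
    · exact hright (hθ.row_mem hb hbend (by omega) (by simp only; omega))
    · exact hdown (hθ.col_mem hbend hb'θ (by simp) (by simp only; omega))
  have hcol : Reach (θ \ S) (b.1, b'.2) (b'.1, b'.2) := by
    refine reach_along (f := fun t => (t, b'.2)) (fun t => by simp [adjacent_iff]) h1.le
      fun t ht ht' => mem_sdiff.2 ⟨hθ.col_mem hbend hb'θ ht.le ht', fun htS => ?_⟩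
    obtain ⟨-, hdown, -⟩ := mem_seCorners.1 (hS htS)
    rcases ht'.lt_or_eq with ht' | rfl
    · exact hdown (hθ.col_mem hbend hb'θ (by simp only; omega) (by simp only; omega))
    · exact hb'S htS
  exact hrow.trans hcol

lemma Nprime_le_dRim (hS : S ⊆ seCorners θ) : Nprime (θ \ S) ≤ dRim (θ \ S) := by
  refine (card_le_card (filter_subset _ _)).trans (Ncomp_le_card fun b hb => ?_)
  -- a box of the component of `b` maximising `i + j` lies on the rim
  obtain ⟨m, hm, hmax⟩ :=
    exists_max_image (comp (θ \ S) b) (fun x => x.1 + x.2) ⟨b, mem_comp_self hb⟩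
  obtain ⟨hmη, hbm⟩ := mem_comp.1 hm
  refine ⟨m, mem_seRim.2 ⟨hmη, fun b' hb' ⟨h1, h2⟩ => ?_⟩, hbm⟩
  have hbb' := hbm.trans (hθ.reach_sdiff hS (mem_sdiff.1 hmη).1 hb' h1 h2)
  linarith [hmax b' (mem_comp.2 ⟨hb', hbb'⟩)]

lemma exists_mem_seCorners_sub_one_mem (hnr : ¬ IsRim θ) :
    ∃ c ∈ seCorners θ, (c.1 - 1, c.2 - 1) ∈ θ := by
  obtain ⟨b, hb, hbr⟩ : ∃ b ∈ θ, b ∉ seRim θ := by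
    by_contra! h
    exact hnr (Subset.antisymm h (filter_subset _ _))
  obtain ⟨b', hb', h1, h2⟩ : ∃ b' ∈ θ, b.1 < b'.1 ∧ b.2 < b'.2 := by
    by_contra! h
    exact hbr (mem_seRim.2 ⟨hb, fun b' hb' hlt => by linarith [h b' hb' hlt.1]⟩)
  -- a box maximising `i + j` among those whose diagonal predecessor lies in `θ` is a corner
  set T := θ.filter fun v => (v.1 - 1, v.2 - 1) ∈ θ
  have hT : (b.1 + 1, b.2 + 1) ∈ T :=
    mem_filter.2 ⟨hθ.add_one_mem_of_lt_of_lt hb hb' h1 h2, by simpa using hb⟩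
  obtain ⟨v, hv, hmax⟩ := exists_max_image T (fun v => v.1 + v.2) ⟨_, hT⟩
  obtain ⟨hvθ, hw⟩ := mem_filter.1 hv
  refine ⟨v, mem_seCorners.2 ⟨hvθ, fun hdown => ?_, fun hright => ?_⟩, hw⟩
  · have hlt : v.1 < v.2 := by linarith [hθ.fst_le_snd _ hdown]
    have hl := hθ.sub_one_mem_of_sub_one_mem hw hvθ hlt
    have := hmax _ (mem_filter.2 ⟨hdown, by simpa using hl⟩)
    simp at this
  · have hup := hθ.mem_of_lt_of_le hw hright (by omega) (by omega)
    have hu : (v.1 - 1, v.2) ∈ θ := hθ.row_mem hw hup (by omega) (by omega)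
    have := hmax _ (mem_filter.2 ⟨hright, by simpa using hu⟩)
    simp at this

section DiagonalCorner

variable (hc : c ∈ seCorners θ) (hw : (c.1 - 1, c.2 - 1) ∈ θ)
include hc hw

lemma up_mem : (c.1 - 1, c.2) ∈ θ :=
  hθ.mem_of_lt_of_le hw (mem_seCorners.1 hc).1 (by omega) (by omega)

lemma exists_lt_of_lt (hb : b ∈ θ) (h1 : b.1 < c.1) (h2 : b.2 < c.2)
    (hbw : b ≠ (c.1 - 1, c.2 - 1)) :
    ∃ b' ∈ θ, b' ∉ seCorners θ ∧ b' ≠ c ∧ b.1 < b'.1 ∧ b.2 < b'.2 := by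
  have hcθ := (mem_seCorners.1 hc).1
  rcases (show b.1 ≤ c.1 - 1 by omega).lt_or_eq with hb1 | hb1
  · have hx := hθ.mem_of_lt_of_le hb hcθ h1 h2.le
    refine ⟨(b.1 + 1, c.2), hθ.col_mem hx hcθ (by omega) (by omega),
      notMem_seCorners_of_add_one_fst_mem (hθ.col_mem hx hcθ (by omega) (by simp only; omega)),
      fun he => by simp [Prod.ext_iff] at he; omega, by simp, h2⟩
  · have hb2 : b.2 < c.2 - 1 := by
      refine lt_of_le_of_ne (by omega) fun hb2 => hbw (Prod.ext hb1 hb2)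
    have hl := hθ.sub_one_mem_of_sub_one_mem hw hcθ (by linarith [hθ.fst_le_snd b hb])
    refine ⟨(c.1, c.2 - 1), hl, notMem_seCorners_of_add_one_snd_mem (by simpa using hcθ),
      fun he => by simp [Prod.ext_iff] at he, by simp only; omega, by simp only; omega⟩

lemma dRim_erase (hS : S ⊆ seCorners θ) (hcS : c ∉ S) :
    dRim ((θ \ S).erase c) = dRim (θ \ S) := by
  have hu := hθ.up_mem hc hw
  have hcη : c ∈ θ \ S := mem_sdiff.2 ⟨(mem_seCorners.1 hc).1, hcS⟩
  have hwη : (c.1 - 1, c.2 - 1) ∈ θ \ S :=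
    mem_sdiff.2 ⟨hw, fun h => notMem_seCorners_of_add_one_snd_mem (by simpa using hu) (hS h)⟩
  have hcrim : c ∈ seRim (θ \ S) :=
    mem_seRim.2 ⟨hcη, fun b hb => hθ.not_lt_of_mem_seCorners hc (mem_sdiff.1 hb).1⟩
  have hwrim : (c.1 - 1, c.2 - 1) ∉ (seRim (θ \ S)).erase c := fun h =>
    (mem_seRim.1 (mem_of_mem_erase h)).2 c hcη ⟨by simp, by simp⟩
  -- removing the corner `c` from the rim exposes exactly its diagonal predecessor
  have hrim : seRim ((θ \ S).erase c) =
      insert (c.1 - 1, c.2 - 1) ((seRim (θ \ S)).erase c) := by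
    ext x
    simp only [mem_insert, mem_erase, mem_seRim]
    constructor
    · rintro ⟨⟨hxc, hxη⟩, hx⟩
      refine or_iff_not_imp_left.2 fun hxw => ⟨hxc, hxη, fun b hb hlt => ?_⟩
      by_cases hbc : b = c
      · subst b
        obtain ⟨b', hb', hb'K, hb'c, h1, h2⟩ :=
          hθ.exists_lt_of_lt hc hw (mem_sdiff.1 hxη).1 hlt.1 hlt.2 hxw
        exact hx b' ⟨hb'c, mem_sdiff.2 ⟨hb', fun h => hb'K (hS h)⟩⟩ ⟨h1, h2⟩
      · exact hx b ⟨hbc, hb⟩ hlt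
    · rintro (rfl | ⟨hxc, hxη, hx⟩)
      · refine ⟨⟨fun h => by simp [Prod.ext_iff] at h, hwη⟩, fun b ⟨hbc, hb⟩ hlt => ?_⟩
        exact hbc (hθ.eq_of_sub_one_lt hc (mem_sdiff.1 hb).1 hlt.1 hlt.2)
      · exact ⟨⟨hxc, hxη⟩, fun b ⟨_, hb⟩ => hx b hb⟩
  rw [dRim, dRim, hrim, card_insert_of_notMem hwrim, card_erase_add_one hcrim]

lemma Nprime_erase (hS : S ⊆ seCorners θ) :
    Nprime ((θ \ S).erase c) = Nprime (θ \ S) := by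
  have hu := hθ.up_mem hc hw
  have hmem : ∀ {x}, x ∈ θ → x ∉ seCorners θ → x ≠ c → x ∈ (θ \ S).erase c :=
    fun hx hxK hxc => mem_erase.2 ⟨hxc, mem_sdiff.2 ⟨hx, fun h => hxK (hS h)⟩⟩
  have huη : (c.1 - 1, c.2) ∈ (θ \ S).erase c := hmem hu
    (notMem_seCorners_of_add_one_fst_mem (by simpa using (mem_seCorners.1 hc).1))
    (by simp [Prod.ext_iff])
  have hwη : (c.1 - 1, c.2 - 1) ∈ (θ \ S).erase c := hmem hw
    (notMem_seCorners_of_add_one_snd_mem (by simpa using hu)) (by simp [Prod.ext_iff])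
  have hcu : Adjacent c (c.1 - 1, c.2) := by simp [adjacent_iff]
  have huw : Adjacent (c.1 - 1, c.2) (c.1 - 1, c.2 - 1) := by simp [adjacent_iff]
  refine Nprime_erase_of_bypass huη (fun y hy hyc => ?_) hcu
    fun hdiag => ⟨_, hwη, ?_, by simp [hdiag]⟩
  · rcases eq_of_adjacent_of_mem_seCorners hc (mem_sdiff.1 (mem_of_mem_erase hy)).1 hyc
      with rfl | rfl
    · exact .refl
    · exact (Reach.single hwη huw).tail ⟨hy, by simp [adjacent_iff]⟩
  · exact (Reach.single (mem_of_mem_erase huη) hcu).tail ⟨mem_of_mem_erase hwη, huw⟩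

end DiagonalCorner

lemma Ccoef_eq_zero_of_not_isRim (hnr : ¬ IsRim θ) (p : ℤ) : Ccoef θ p = 0 := by
  obtain ⟨c, hc, hw⟩ := hθ.exists_mem_seCorners_sub_one_mem hnr
  refine sum_powerset_neg_one_pow_mul_eq_zero hc _ fun t ht => ?_
  have htK := ht.trans (erase_subset c _)
  rw [sdiff_insert, hθ.Nprime_erase hc hw htK,
    hθ.dRim_erase hc hw htK fun h => notMem_erase c _ (ht h)]

lemma Ccoef_of_nonpos {p : ℤ} (hp : p ≤ 0) : Ccoef θ p = if θ = ∅ then 1 else 0 := by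
  have hterm : ∀ S ∈ (seCorners θ).powerset,
      (-1) ^ S.card * hcoef (Nprime (θ \ S)) ((dRim (θ \ S) : ℤ) - p) = (-1) ^ S.card :=
    fun S hS => by
      rw [hcoef_of_le (by have := hθ.Nprime_le_dRim (mem_powerset.1 hS); omega), mul_one]
  rw [Ccoef, sum_congr rfl hterm, sum_powerset_neg_one_pow_card]
  exact if_congr seCorners_eq_empty rfl rfl

end IsSkewShape

lemma Ccoef_empty (p : ℤ) : Ccoef ∅ p = hcoef 0 (-p) := by
  simp [Ccoef, seCorners, Nprime, comps, dRim, seRim]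

theorem Ccoef_basic_general (n : ℕ) (θ : Finset (ℤ × ℤ))
    (hθ : IsShiftedSkewDiagram n θ) :
    (θ.Nonempty → ¬ IsRim θ → ∀ p : ℤ, Ccoef θ p = 0) ∧
    (∀ p : ℤ, p ≤ 0 → Ccoef θ p = if θ = (∅ : Finset (ℤ × ℤ)) then 1 else 0) ∧
    (∀ p : ℤ, 0 < p → Ccoef (∅ : Finset (ℤ × ℤ)) p = 0) := by
  have hshape := hθ.isSkewShape
  refine ⟨fun _ hnr => hshape.Ccoef_eq_zero_of_not_isRim hnr, fun _ => hshape.Ccoef_of_nonpos,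
    fun p hp => ?_⟩
  rw [Ccoef_empty]
  exact hcoef_of_neg (by omega)

/-- If `θ` is a nonempty shifted skew diagram that is not a rim, then
`C(θ,p) = 0` for every integer `p`; moreover, for every integer `p ≤ 0` one has
`C(θ,p) = 1` if `θ = ∅` and `C(θ,p) = 0` if `θ ≠ ∅`, and `C(∅,p) = 0` for
every integer `p > 0`. -/
theorem Ccoef_basic (n : ℕ) (hn : 0 < n) (θ : Finset (ℤ × ℤ))
    (hθ : IsShiftedSkewDiagram n θ) :
    (θ.Nonempty → ¬ IsRim θ → ∀ p : ℤ, Ccoef θ p = 0) ∧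
    (∀ p : ℤ, p ≤ 0 → Ccoef θ p = if θ = (∅ : Finset (ℤ × ℤ)) then 1 else 0) ∧
    (∀ p : ℤ, 0 < p → Ccoef (∅ : Finset (ℤ × ℤ)) p = 0) :=
  Ccoef_basic_general n θ hθ
end
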